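/- arXiv:2402.15789 — 8 statements merged into one kernel-verified Lean document; each statement's English description precedes it below -/
import Mathlib

section
/- Let $1 < p < \infty$, $0 < s < 1$, and $0 \le a \le \infty$. For every $f \in W^{1,p}_{\mathrm{loc}}((0,a))$ there holds $\int_0^a \int_0^a \frac{|f(x)-f(y)|^p}{|x-y|^{1+sp}}\,dx\,dy \le \frac{C}{s^p (1-s) p} \int_0^a x^{(1-s)p} |f'(x)|^p dx$ for an absolute constant $C$ (one may take $C = 2$). -/
open MeasureTheory Set Function
open scoped ENNReal

/-! For `x < y`, Hölder's inequality with the weight `(t - x) ^ ((1 - s) (p - 1))` bounds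
`|f y - f x| ^ p / (y - x) ^ (1 + s p)` by
`s ^ (1 - p) (y - x) ^ (-(1 + s)) ∫_x^y |f' t| ^ p (t - x) ^ ((1 - s) (p - 1)) dt`.
Integrating this majorant (`gagliardoMajorant` with `G = |f'| ^ p`) first over `y > t` and then
over `x ∈ (0, t)` (Tonelli) produces the factor `1 / (s (1 - s) p)` and the weight
`t ^ ((1 - s) p)`; the factor `2` accounts for the two orderings of `x` and `y`. -/

lemma lintegral_Ioo_rpow {r c : ℝ} (hr : -1 < r) (hc : 0 ≤ c) :
    ∫⁻ u in Ioo 0 c, ENNReal.ofReal (u ^ r) = ENNReal.ofReal (c ^ (r + 1) / (r + 1)) := by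
  have hint : IntegrableOn (fun u : ℝ => u ^ r) (Ioo 0 c) :=
    (intervalIntegrable_iff_integrableOn_Ioo_of_le hc).1
      (intervalIntegral.intervalIntegrable_rpow' hr)
  rw [← ofReal_integral_eq_lintegral_ofReal hint
    ((ae_restrict_mem measurableSet_Ioo).mono fun u hu => Real.rpow_nonneg hu.1.le r),
    ← integral_Ioc_eq_integral_Ioo, ← intervalIntegral.integral_of_le hc,
    integral_rpow (Or.inl hr), Real.zero_rpow (by linarith), sub_zero]

lemma lintegral_Ioi_rpow {r c : ℝ} (hr : r < -1) (hc : 0 < c) :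
    ∫⁻ u in Ioi c, ENNReal.ofReal (u ^ r) = ENNReal.ofReal (-c ^ (r + 1) / (r + 1)) := by
  rw [← ofReal_integral_eq_lintegral_ofReal (integrableOn_Ioi_rpow_of_lt hr hc)
    ((ae_restrict_mem measurableSet_Ioi).mono fun u hu => Real.rpow_nonneg (hc.trans hu).le r),
    integral_Ioi_rpow_of_lt hr hc]

lemma lintegral_Ioo_sub_rpow {r x y : ℝ} (hr : -1 < r) (hxy : x ≤ y) :
    ∫⁻ t in Ioo x y, ENNReal.ofReal ((t - x) ^ r)
      = ENNReal.ofReal ((y - x) ^ (r + 1) / (r + 1)) := by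
  rw [← lintegral_Ioo_rpow hr (sub_nonneg.2 hxy), ← (measurePreserving_sub_right volume x)
    |>.setLIntegral_comp_preimage_emb (measurableEmbedding_subRight x)
      (fun u => ENNReal.ofReal (u ^ r)),
    preimage_sub_const_Ioo, zero_add, sub_add_cancel]

lemma lintegral_Ioo_rsub_rpow {r x y : ℝ} (hr : -1 < r) (hxy : x ≤ y) :
    ∫⁻ t in Ioo x y, ENNReal.ofReal ((y - t) ^ r)
      = ENNReal.ofReal ((y - x) ^ (r + 1) / (r + 1)) := by
  rw [← lintegral_Ioo_rpow hr (sub_nonneg.2 hxy), ← (Measure.measurePreserving_sub_left volume y)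
    |>.setLIntegral_comp_preimage_emb (measurableEmbedding_subLeft y)
      (fun u => ENNReal.ofReal (u ^ r)),
    preimage_const_sub_Ioo, sub_zero, sub_sub_cancel]

lemma lintegral_Ioi_sub_rpow {r x t : ℝ} (hr : r < -1) (hxt : x < t) :
    ∫⁻ y in Ioi t, ENNReal.ofReal ((y - x) ^ r)
      = ENNReal.ofReal (-(t - x) ^ (r + 1) / (r + 1)) := by
  rw [← lintegral_Ioi_rpow hr (sub_pos.2 hxt), ← (measurePreserving_sub_right volume x)
    |>.setLIntegral_comp_preimage_emb (measurableEmbedding_subRight x)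
      (fun u => ENNReal.ofReal (u ^ r)),
    preimage_sub_const_Ioi, sub_add_cancel]

lemma lintegral_Ioi_lintegral_Ioo_swap (a : ℝ) {F : ℝ → ℝ → ℝ≥0∞} (hF : Measurable (uncurry F)) :
    ∫⁻ x in Ioi a, ∫⁻ t in Ioo a x, F x t = ∫⁻ t in Ioi a, ∫⁻ x in Ioi t, F x t := by
  set S : Set (ℝ × ℝ) := {q | q.2 < q.1}
  have hS : MeasurableSet S := measurableSet_lt measurable_snd measurable_fst
  calc ∫⁻ x in Ioi a, ∫⁻ t in Ioo a x, F x t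
      = ∫⁻ x in Ioi a, ∫⁻ t in Ioi a, S.indicator (uncurry F) (x, t) := by
        refine lintegral_congr fun x => ?_
        rw [← Ioi_inter_Iio, inter_comm, ← Measure.restrict_restrict measurableSet_Iio,
          ← lintegral_indicator measurableSet_Iio]
        rfl
    _ = ∫⁻ t in Ioi a, ∫⁻ x in Ioi a, S.indicator (uncurry F) (x, t) :=
        lintegral_lintegral_swap (hF.indicator hS).aemeasurable
    _ = ∫⁻ t in Ioi a, ∫⁻ x in Ioi t, F x t := by
        refine setLIntegral_congr_fun measurableSet_Ioi fun t ht => ?_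
        change ∫⁻ x in Ioi a, (Ioi t).indicator (fun x => F x t) x = _
        rw [lintegral_indicator measurableSet_Ioi, Measure.restrict_restrict measurableSet_Ioi,
          inter_eq_left.2 (Ioi_subset_Ioi (le_of_lt ht))]

lemma measurable_setLIntegral_Ioo {K : ℝ → ℝ → ℝ≥0∞} (hK : Measurable (uncurry K)) :
    Measurable fun q : ℝ × ℝ => ∫⁻ t in Ioo q.1 q.2, K q.1 t := by
  set S : Set ((ℝ × ℝ) × ℝ) := {u | u.1.1 < u.2 ∧ u.2 < u.1.2}
  have hS : MeasurableSet S := (measurableSet_lt measurable_fst.fst measurable_snd).inter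
    (measurableSet_lt measurable_snd measurable_fst.snd)
  have hKS : Measurable (S.indicator fun u => K u.1.1 u.2) :=
    (hK.comp (measurable_fst.fst.prodMk measurable_snd)).indicator hS
  convert hKS.lintegral_prod_right' (ν := volume) using 2 with q
  rw [← lintegral_indicator measurableSet_Ioo]
  rfl

lemma lintegral_lintegral_add_swap {α : Type*} [MeasurableSpace α] {μ : Measure α} [SFinite μ]
    {F : α → α → ℝ≥0∞} (hF : Measurable (uncurry F)) :
    ∫⁻ x, ∫⁻ y, (F x y + F y x) ∂μ ∂μ = 2 * ∫⁻ x, ∫⁻ y, F x y ∂μ ∂μ := by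
  have hFx : ∀ x, Measurable (F x) := fun x => hF.comp measurable_prodMk_left
  have hI : Measurable fun x => ∫⁻ y, F x y ∂μ := hF.lintegral_prod_right'
  rw [lintegral_congr fun x => lintegral_add_left (hFx x) _,
    lintegral_add_left hI,
    lintegral_lintegral_swap (f := fun x y => F y x) (hF.comp measurable_swap).aemeasurable,
    two_mul]

lemma setLIntegral_indicator_mul {α : Type*} [MeasurableSpace α] {μ : Measure α} {S D : Set α}
    (hD : MeasurableSet D) (hDS : D ⊆ S) (g w : α → ℝ≥0∞) :
    ∫⁻ t in S, D.indicator g t * w t ∂μ = ∫⁻ t in D, g t * w t ∂μ := by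
  simp_rw [← indicator_mul_left]
  rw [setLIntegral_indicator hD, inter_eq_left.2 hDS]

lemma lintegral_rpow_le_lintegral_mul_weight {α : Type*} [MeasurableSpace α] {μ : Measure α}
    {p : ℝ} (hp : 1 < p) {g w : α → ℝ≥0∞} (hg : AEMeasurable g μ) (hw : AEMeasurable w μ)
    (hw0 : ∀ᵐ a ∂μ, w a ≠ 0) (hwt : ∀ᵐ a ∂μ, w a ≠ ⊤) :
    (∫⁻ a, g a ∂μ) ^ p ≤ (∫⁻ a, g a ^ p * w a ∂μ) * (∫⁻ a, w a ^ (-(p - 1)⁻¹) ∂μ) ^ (p - 1) := by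
  have hp0 : 0 < p := by linarith
  set q := p / (p - 1)
  have hpq : p.HolderConjugate q := .conjExponent hp
  have hsplit : g =ᵐ[μ] (fun a => g a * w a ^ p⁻¹) * fun a => w a ^ (-p⁻¹) := by
    filter_upwards [hw0, hwt] with a h0 ht
    rw [Pi.mul_apply, mul_assoc, ← ENNReal.rpow_add _ _ h0 ht, add_neg_cancel, ENNReal.rpow_zero,
      mul_one]
  have holder := ENNReal.lintegral_mul_le_Lp_mul_Lq μ hpq (f := fun a => g a * w a ^ p⁻¹)
    (g := fun a => w a ^ (-p⁻¹)) (hg.mul (hw.pow_const p⁻¹)) (hw.pow_const (-p⁻¹))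
  rw [← lintegral_congr_ae hsplit] at holder
  have hgw : ∀ a, (g a * w a ^ p⁻¹) ^ p = g a ^ p * w a := fun a => by
    rw [ENNReal.mul_rpow_of_nonneg _ _ hp0.le, ← ENNReal.rpow_mul, inv_mul_cancel₀ hp0.ne',
      ENNReal.rpow_one]
  have hwq : ∀ a, (w a ^ (-p⁻¹)) ^ q = w a ^ (-(p - 1)⁻¹) := fun a => by
    rw [← ENNReal.rpow_mul]
    congr 1
    simp only [q]
    field_simp
  simp only [hgw, hwq] at holder
  calc (∫⁻ a, g a ∂μ) ^ p
      ≤ ((∫⁻ a, g a ^ p * w a ∂μ) ^ (1 / p) * (∫⁻ a, w a ^ (-(p - 1)⁻¹) ∂μ) ^ (1 / q)) ^ p :=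
        ENNReal.rpow_le_rpow holder hp0.le
    _ = (∫⁻ a, g a ^ p * w a ∂μ) * (∫⁻ a, w a ^ (-(p - 1)⁻¹) ∂μ) ^ (p - 1) := by
        rw [ENNReal.mul_rpow_of_nonneg _ _ hp0.le, ← ENNReal.rpow_mul, ← ENNReal.rpow_mul,
          one_div_mul_cancel hp0.ne', ENNReal.rpow_one, one_div, inv_mul_eq_div,
          hpq.div_conj_eq_sub_one]

lemma ofReal_abs_sub_le_lintegral_Ioo {f f' : ℝ → ℝ} {x y : ℝ} (hxy : x ≤ y)
    (hf : f y - f x = ∫ t in x..y, f' t) :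
    ENNReal.ofReal |f y - f x| ≤ ∫⁻ t in Ioo x y, ENNReal.ofReal |f' t| := by
  rw [hf, intervalIntegral.integral_of_le hxy, ← Real.enorm_eq_ofReal_abs]
  refine (enorm_integral_le_lintegral_enorm _).trans_eq ?_
  rw [setLIntegral_congr Ioo_ae_eq_Ioc.symm]
  simp only [Real.enorm_eq_ofReal_abs]

lemma lintegral_Ioi_rpow_mul_lintegral_Ioo {s x : ℝ} (hs : 0 < s) {H : ℝ → ℝ≥0∞}
    (hH : Measurable H) :
    ∫⁻ y in Ioi x, ENNReal.ofReal ((y - x) ^ (-(1 + s))) * ∫⁻ t in Ioo x y, H t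
      = ∫⁻ t in Ioi x, ENNReal.ofReal ((t - x) ^ (-s) / s) * H t := by
  have hk : Measurable fun y : ℝ => ENNReal.ofReal ((y - x) ^ (-(1 + s))) := by fun_prop
  calc ∫⁻ y in Ioi x, ENNReal.ofReal ((y - x) ^ (-(1 + s))) * ∫⁻ t in Ioo x y, H t
      = ∫⁻ y in Ioi x, ∫⁻ t in Ioo x y, ENNReal.ofReal ((y - x) ^ (-(1 + s))) * H t :=
        lintegral_congr fun y => (lintegral_const_mul' _ _ ENNReal.ofReal_ne_top).symm
    _ = ∫⁻ t in Ioi x, ∫⁻ y in Ioi t, ENNReal.ofReal ((y - x) ^ (-(1 + s))) * H t :=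
        lintegral_Ioi_lintegral_Ioo_swap x ((hk.comp measurable_fst).mul (hH.comp measurable_snd))
    _ = ∫⁻ t in Ioi x, ENNReal.ofReal ((t - x) ^ (-s) / s) * H t := by
        refine setLIntegral_congr_fun measurableSet_Ioi fun t ht => ?_
        rw [lintegral_mul_const _ hk, lintegral_Ioi_sub_rpow (by linarith) ht,
          show -(1 + s) + 1 = -s by ring, neg_div_neg_eq]

lemma lintegral_Ioi_lintegral_Ioi_sub_rpow {r : ℝ} (hr : -1 < r) {G : ℝ → ℝ≥0∞}
    (hG : Measurable G) :
    ∫⁻ x in Ioi 0, ∫⁻ t in Ioi x, G t * ENNReal.ofReal ((t - x) ^ r)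
      = ∫⁻ t in Ioi 0, G t * ENNReal.ofReal (t ^ (r + 1) / (r + 1)) := by
  rw [← lintegral_Ioi_lintegral_Ioo_swap 0 (F := fun t x => G t * ENNReal.ofReal ((t - x) ^ r))
    (by fun_prop)]
  refine setLIntegral_congr_fun measurableSet_Ioi fun t ht => ?_
  rw [lintegral_const_mul _ (by fun_prop), lintegral_Ioo_rsub_rpow hr (le_of_lt ht), sub_zero]

noncomputable def gagliardoMajorant (p s : ℝ) (G : ℝ → ℝ≥0∞) (x y : ℝ) : ℝ≥0∞ :=
  ENNReal.ofReal ((y - x) ^ (-(1 + s))) *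
    ∫⁻ t in Ioo x y, G t * ENNReal.ofReal ((t - x) ^ ((1 - s) * (p - 1)))

lemma gagliardoMajorant_of_le {p s : ℝ} (G : ℝ → ℝ≥0∞) {x y : ℝ} (h : y ≤ x) :
    gagliardoMajorant p s G x y = 0 := by
  rw [gagliardoMajorant, Ioo_eq_empty (not_lt.2 h), Measure.restrict_empty, lintegral_zero_measure,
    mul_zero]

lemma measurable_uncurry_gagliardoMajorant (p s : ℝ) {G : ℝ → ℝ≥0∞} (hG : Measurable G) :
    Measurable (uncurry (gagliardoMajorant p s G)) := by
  have hK : Measurable (uncurry fun x t : ℝ =>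
      G t * ENNReal.ofReal ((t - x) ^ ((1 - s) * (p - 1)))) := by fun_prop
  exact (by fun_prop : Measurable fun q : ℝ × ℝ => ENNReal.ofReal ((q.2 - q.1) ^ (-(1 + s)))).mul
    (measurable_setLIntegral_Ioo hK)

lemma lintegral_Ioi_lintegral_Ioi_gagliardoMajorant {p s : ℝ} (hs : 0 < s)
    (hsp : 0 < (1 - s) * p) {G : ℝ → ℝ≥0∞} (hG : Measurable G) :
    ∫⁻ x in Ioi 0, ∫⁻ y in Ioi x, gagliardoMajorant p s G x y
      = ENNReal.ofReal (1 / (s * ((1 - s) * p))) *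
        ∫⁻ t in Ioi 0, G t * ENNReal.ofReal (t ^ ((1 - s) * p)) := by
  calc ∫⁻ x in Ioi 0, ∫⁻ y in Ioi x, gagliardoMajorant p s G x y
      = ∫⁻ x in Ioi 0, ∫⁻ t in Ioi x, ENNReal.ofReal ((t - x) ^ (-s) / s) *
          (G t * ENNReal.ofReal ((t - x) ^ ((1 - s) * (p - 1)))) :=
        lintegral_congr fun x => lintegral_Ioi_rpow_mul_lintegral_Ioo hs (by fun_prop)
    _ = ∫⁻ x in Ioi 0, ENNReal.ofReal (1 / s) *
          ∫⁻ t in Ioi x, G t * ENNReal.ofReal ((t - x) ^ ((1 - s) * p - 1)) := by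
        refine lintegral_congr fun x => ?_
        rw [← lintegral_const_mul' _ _ ENNReal.ofReal_ne_top]
        refine setLIntegral_congr_fun measurableSet_Ioi fun t ht => ?_
        have htx : 0 < t - x := sub_pos.2 ht
        have hexp : (t - x) ^ (-s) / s * (t - x) ^ ((1 - s) * (p - 1))
            = 1 / s * (t - x) ^ ((1 - s) * p - 1) := by
          rw [show (1 - s) * p - 1 = -s + (1 - s) * (p - 1) by ring, Real.rpow_add htx]
          ring
        rw [mul_left_comm, ← ENNReal.ofReal_mul (by positivity), hexp,
          ENNReal.ofReal_mul (by positivity), mul_left_comm]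
    _ = ENNReal.ofReal (1 / (s * ((1 - s) * p))) *
          ∫⁻ t in Ioi 0, G t * ENNReal.ofReal (t ^ ((1 - s) * p)) := by
        rw [lintegral_const_mul' _ _ ENNReal.ofReal_ne_top,
          lintegral_Ioi_lintegral_Ioi_sub_rpow (by linarith) hG, sub_add_cancel]
        have hdiv : ∀ t : ℝ, G t * ENNReal.ofReal (t ^ ((1 - s) * p) / ((1 - s) * p))
            = ENNReal.ofReal (1 / ((1 - s) * p)) * (G t * ENNReal.ofReal (t ^ ((1 - s) * p))) := by
          intro t
          rw [div_eq_inv_mul, ← one_div, ENNReal.ofReal_mul (by positivity), mul_left_comm]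
        simp_rw [hdiv]
        rw [lintegral_const_mul' _ _ ENNReal.ofReal_ne_top, ← mul_assoc,
          ← ENNReal.ofReal_mul (by positivity), one_div_mul_one_div]

lemma gagliardoMajorant_congr {p s : ℝ} {G G' : ℝ → ℝ≥0∞} {x y : ℝ} (h : EqOn G G' (Ioo x y)) :
    gagliardoMajorant p s G x y = gagliardoMajorant p s G' x y := by
  unfold gagliardoMajorant
  rw [setLIntegral_congr_fun measurableSet_Ioo fun t ht => by rw [h ht]]

lemma lintegral_Ioo_rpow_le_weighted {p s x y : ℝ} (hp : 1 < p) (hs : 0 < s) (hxy : x ≤ y)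
    {g : ℝ → ℝ≥0∞} (hg : AEMeasurable g (volume.restrict (Ioo x y))) :
    (∫⁻ t in Ioo x y, g t) ^ p
      ≤ (∫⁻ t in Ioo x y, g t ^ p * ENNReal.ofReal ((t - x) ^ ((1 - s) * (p - 1)))) *
        ENNReal.ofReal ((y - x) ^ s / s) ^ (p - 1) := by
  have hp1 : p - 1 ≠ 0 := by linarith
  have hpos : ∀ᵐ t ∂volume.restrict (Ioo x y), 0 < t - x :=
    (ae_restrict_mem measurableSet_Ioo).mono fun t ht => sub_pos.2 ht.1
  have hw : ∫⁻ t in Ioo x y, ENNReal.ofReal ((t - x) ^ ((1 - s) * (p - 1))) ^ (-(p - 1)⁻¹)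
      = ENNReal.ofReal ((y - x) ^ s / s) := by
    rw [lintegral_congr_ae (hpos.mono fun t ht => by
      rw [ENNReal.ofReal_rpow_of_pos (Real.rpow_pos_of_pos ht _), ← Real.rpow_mul ht.le,
        show (1 - s) * (p - 1) * -(p - 1)⁻¹ = s - 1 by field_simp; ring]),
      lintegral_Ioo_sub_rpow (by linarith) hxy, sub_add_cancel]
  rw [← hw]
  exact lintegral_rpow_le_lintegral_mul_weight hp hg (by fun_prop)
    (hpos.mono fun t ht => (ENNReal.ofReal_pos.2 (Real.rpow_pos_of_pos ht _)).ne')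
    (ae_of_all _ fun _ => ENNReal.ofReal_ne_top)

lemma ofReal_rpow_div_le_gagliardoMajorant {p s : ℝ} (hp : 1 < p) (hs : 0 < s) {f f' : ℝ → ℝ}
    (hf' : Measurable f') {x y : ℝ} (hxy : x < y) (hf : f y - f x = ∫ t in x..y, f' t) :
    ENNReal.ofReal (|f x - f y| ^ p / |x - y| ^ (1 + s * p))
      ≤ ENNReal.ofReal (s ^ (1 - p)) *
        gagliardoMajorant p s (fun t => ENNReal.ofReal (|f' t| ^ p)) x y := by
  have hp0 : 0 < p := by linarith
  have hd : 0 < y - x := sub_pos.2 hxy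
  set I := ∫⁻ t in Ioo x y, ENNReal.ofReal (|f' t| ^ p) *
    ENNReal.ofReal ((t - x) ^ ((1 - s) * (p - 1)))
  have hfd : ENNReal.ofReal (|f x - f y| ^ p)
      ≤ I * ENNReal.ofReal (((y - x) ^ s / s) ^ (p - 1)) := by
    have hholder := lintegral_Ioo_rpow_le_weighted hp hs hxy.le
      (g := fun t => ENNReal.ofReal |f' t|) (by fun_prop)
    simp only [ENNReal.ofReal_rpow_of_nonneg (abs_nonneg _) hp0.le] at hholder
    rw [abs_sub_comm, ← ENNReal.ofReal_rpow_of_nonneg (abs_nonneg _) hp0.le,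
      ← ENNReal.ofReal_rpow_of_nonneg (by positivity : 0 ≤ (y - x) ^ s / s) (by linarith)]
    exact (ENNReal.rpow_le_rpow (ofReal_abs_sub_le_lintegral_Ioo hxy.le hf) hp0.le).trans hholder
  have hconst : ((y - x) ^ s / s) ^ (p - 1) * ((y - x) ^ (1 + s * p))⁻¹
      = s ^ (1 - p) * (y - x) ^ (-(1 + s)) := by
    rw [Real.div_rpow (by positivity) hs.le, ← Real.rpow_mul hd.le, div_eq_mul_inv,
      ← Real.rpow_neg hs.le, ← Real.rpow_neg hd.le, mul_right_comm, ← Real.rpow_add hd, mul_comm]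
    congr 2 <;> ring
  calc ENNReal.ofReal (|f x - f y| ^ p / |x - y| ^ (1 + s * p))
      = ENNReal.ofReal (|f x - f y| ^ p) * ENNReal.ofReal (((y - x) ^ (1 + s * p))⁻¹) := by
        rw [abs_sub_comm x y, abs_of_pos hd, div_eq_mul_inv, ENNReal.ofReal_mul (by positivity)]
    _ ≤ I * ENNReal.ofReal (((y - x) ^ s / s) ^ (p - 1)) *
          ENNReal.ofReal (((y - x) ^ (1 + s * p))⁻¹) := by gcongr
    _ = ENNReal.ofReal (s ^ (1 - p)) *
          gagliardoMajorant p s (fun t => ENNReal.ofReal (|f' t| ^ p)) x y := by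
        rw [mul_assoc, ← ENNReal.ofReal_mul (by positivity), hconst,
          ENNReal.ofReal_mul (by positivity), gagliardoMajorant]
        ring

lemma lintegral_lintegral_gagliardoMajorant_le {p s : ℝ} (G : ℝ → ℝ≥0∞) {D : Set ℝ}
    (hDpos : D ⊆ Ioi 0) :
    ∫⁻ x in D, ∫⁻ y in D, gagliardoMajorant p s G x y
      ≤ ∫⁻ x in Ioi 0, ∫⁻ y in Ioi x, gagliardoMajorant p s G x y := by
  refine (lintegral_mono fun x => ?_).trans (lintegral_mono_set hDpos)
  refine (setLIntegral_le_lintegral _ _).trans_eq (setLIntegral_eq_of_support_subset ?_).symm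
  exact fun y hy => not_le.1 fun hyx => hy (gagliardoMajorant_of_le G hyx)

section Interval

variable {p s : ℝ} {f f' : ℝ → ℝ} {D : Set ℝ}

lemma ofReal_rpow_div_le_gagliardoMajorant_add (hp : 1 < p) (hs : 0 < s) (hf' : Measurable f')
    (hDconn : D.OrdConnected) (hf : ∀ x ∈ D, ∀ y ∈ D, x ≤ y → f y - f x = ∫ t in x..y, f' t)
    {x y : ℝ} (hx : x ∈ D) (hy : y ∈ D) :
    ENNReal.ofReal (|f x - f y| ^ p / |x - y| ^ (1 + s * p))
      ≤ ENNReal.ofReal (s ^ (1 - p)) *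
        (gagliardoMajorant p s (D.indicator fun t => ENNReal.ofReal (|f' t| ^ p)) x y +
          gagliardoMajorant p s (D.indicator fun t => ENNReal.ofReal (|f' t| ^ p)) y x) := by
  have hlt : ∀ {x y : ℝ}, x ∈ D → y ∈ D → x < y →
      ENNReal.ofReal (|f x - f y| ^ p / |x - y| ^ (1 + s * p)) ≤ ENNReal.ofReal (s ^ (1 - p)) *
        gagliardoMajorant p s (D.indicator fun t => ENNReal.ofReal (|f' t| ^ p)) x y := by
    intro x y hx hy hxy
    rw [gagliardoMajorant_congr fun t ht =>
      indicator_of_mem (hDconn.out hx hy (Ioo_subset_Icc_self ht)) _]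
    exact ofReal_rpow_div_le_gagliardoMajorant hp hs hf' hxy (hf x hx y hy hxy.le)
  rcases lt_trichotomy x y with hxy | rfl | hyx
  · exact (hlt hx hy hxy).trans (by gcongr; exact le_self_add)
  · simp [Real.zero_rpow (by linarith : p ≠ 0)]
  · rw [abs_sub_comm (f x), abs_sub_comm x]
    exact (hlt hy hx hyx).trans (by gcongr; exact le_add_self)

theorem lintegral_lintegral_rpow_div_le (hp : 1 < p) (hs0 : 0 < s) (hs1 : s < 1)
    (hf' : Measurable f') (hD : MeasurableSet D) (hDpos : D ⊆ Ioi 0) (hDconn : D.OrdConnected)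
    (hf : ∀ x ∈ D, ∀ y ∈ D, x ≤ y → f y - f x = ∫ t in x..y, f' t) :
    ∫⁻ x in D, ∫⁻ y in D, ENNReal.ofReal (|f x - f y| ^ p / |x - y| ^ (1 + s * p))
      ≤ ENNReal.ofReal (2 / (s ^ p * (1 - s) * p)) *
        ∫⁻ x in D, ENNReal.ofReal (x ^ ((1 - s) * p) * |f' x| ^ p) := by
  set G := D.indicator fun t => ENNReal.ofReal (|f' t| ^ p)
  have hG : Measurable G :=
    (by fun_prop : Measurable fun t => ENNReal.ofReal (|f' t| ^ p)).indicator hD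
  set M := gagliardoMajorant p s G
  set c := ENNReal.ofReal (s ^ (1 - p))
  have hconst : c * (2 * ENNReal.ofReal (1 / (s * ((1 - s) * p))))
      = ENNReal.ofReal (2 / (s ^ p * (1 - s) * p)) := by
    rw [← ENNReal.ofReal_ofNat 2, ← ENNReal.ofReal_mul zero_le_two,
      ← ENNReal.ofReal_mul (Real.rpow_nonneg hs0.le _), Real.rpow_sub hs0, Real.rpow_one]
    congr 1
    field_simp
  calc ∫⁻ x in D, ∫⁻ y in D, ENNReal.ofReal (|f x - f y| ^ p / |x - y| ^ (1 + s * p))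
      ≤ ∫⁻ x in D, ∫⁻ y in D, c * (M x y + M y x) :=
        setLIntegral_mono' hD fun x hx => setLIntegral_mono' hD fun y hy =>
          ofReal_rpow_div_le_gagliardoMajorant_add hp hs0 hf' hDconn hf hx hy
    _ = c * (2 * ∫⁻ x in D, ∫⁻ y in D, M x y) := by
        simp_rw [lintegral_const_mul' c _ ENNReal.ofReal_ne_top]
        rw [lintegral_lintegral_add_swap (measurable_uncurry_gagliardoMajorant p s hG)]
    _ ≤ c * (2 * ∫⁻ x in Ioi 0, ∫⁻ y in Ioi x, M x y) := by
        gcongr c * (2 * ?_)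
        exact lintegral_lintegral_gagliardoMajorant_le G hDpos
    _ = ENNReal.ofReal (2 / (s ^ p * (1 - s) * p)) *
          ∫⁻ x in D, ENNReal.ofReal (|f' x| ^ p) * ENNReal.ofReal (x ^ ((1 - s) * p)) := by
        rw [lintegral_Ioi_lintegral_Ioi_gagliardoMajorant hs0
          (mul_pos (by linarith) (by linarith)) hG, ← hconst,
          ← setLIntegral_indicator_mul hD hDpos]
        ring
    _ = ENNReal.ofReal (2 / (s ^ p * (1 - s) * p)) *
          ∫⁻ x in D, ENNReal.ofReal (x ^ ((1 - s) * p) * |f' x| ^ p) := by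
        simp_rw [mul_comm (ENNReal.ofReal (|f' _| ^ p)),
          ← ENNReal.ofReal_mul' (Real.rpow_nonneg (abs_nonneg _) p)]

end Interval

/-- A one-dimensional weighted fractional Hardy-type inequality: for
`f ∈ W^{1,p}_loc((0,a))` (encoded via the fundamental theorem of calculus with
locally integrable derivative `f'`), the Gagliardo seminorm of `f` on `(0,a)`
is bounded by the weighted `L^p` norm of `f'`, with constant `2/(s^p (1-s) p)`. -/
theorem stmt1 (p s : ℝ) (a : ℝ≥0∞) (hp : 1 < p) (hs0 : 0 < s) (hs1 : s < 1)
    (f f' : ℝ → ℝ) (hf' : Measurable f')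
    (hftc : ∀ x y : ℝ, 0 < x → ENNReal.ofReal x < a → 0 < y → ENNReal.ofReal y < a → x ≤ y →
      IntervalIntegrable f' volume x y ∧ f y - f x = ∫ t in x..y, f' t) :
    ∫⁻ x in {x : ℝ | 0 < x ∧ ENNReal.ofReal x < a},
      ∫⁻ y in {y : ℝ | 0 < y ∧ ENNReal.ofReal y < a},
        ENNReal.ofReal (|f x - f y| ^ p / |x - y| ^ (1 + s * p))
      ≤ ENNReal.ofReal (2 / (s ^ p * (1 - s) * p)) *
        ∫⁻ x in {x : ℝ | 0 < x ∧ ENNReal.ofReal x < a},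
          ENNReal.ofReal (x ^ ((1 - s) * p) * |f' x| ^ p) := by
  refine lintegral_lintegral_rpow_div_le hp hs0 hs1 hf' ?_ (fun x hx => hx.1) ?_
    (fun x hx y hy hxy => (hftc x y hx.1 hx.2 hy.1 hy.2 hxy).2)
  · exact (measurableSet_lt measurable_const measurable_id).inter
      (measurableSet_lt ENNReal.measurable_ofReal measurable_const)
  · exact ⟨fun x hx y hy t ht =>
      ⟨hx.1.trans_le ht.1, (ENNReal.ofReal_le_ofReal ht.2).trans_lt hy.2⟩⟩
end

section
/- Let $1 < p < \infty$ and $0 < s < 1/p$. For all measurable $f$ on the first quadrant $\mathcal{Q}_1 = (0,\infty)^2$ there holds $\int_{\mathcal{Q}_1} \int_0^2 \int_{x_1}^{x_1+z} \int_{x_2}^{x_2+z} \frac{|f(y_1,y_2)|^p}{z^{2+sp}}\,dy_2\,dy_1\,dz\,dx_1\,dx_2 \lesssim_{s,p} \int_{\mathcal{Q}_1} \min\{x_1,1\}^{1-sp} |f(x_1,x_2)|^p\,dx_1\,dx_2$. -/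
/-!
For fixed `y > 0` and `z`, the base points `x > 0` of windows `(x, x + z)` containing `y` form an
interval of length `min y z`. So, by Tonelli, the left side equals
`∫₀² ∫∫ min(y₁,z) min(y₂,z) z^(-2-sp) |f y₁ y₂|^p`. Bounding `min(y₂,z) ≤ z` leaves the kernel
`∫₀² min(y₁,z) z^(-1-sp) dz`. Since `min(y₁,z) ≤ 2 min(w,z)` for `z < 2`, where `w = min(y₁,1)`,
this is at most twice `∫₀^∞ min(w,z) z^(-1-sp) dz = w^(1-sp) / (sp(1-sp))`, which converges at `0`
because `sp < 1` and at `∞` because `sp > 0`.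
-/

open MeasureTheory Set
open scoped ENNReal

theorem Measurable.lintegral_Ioo {α : Type*} [MeasurableSpace α] {G : α → ℝ → ℝ≥0∞}
    (hG : Measurable (Function.uncurry G)) {a b : α → ℝ} (ha : Measurable a)
    (hb : Measurable b) : Measurable fun q => ∫⁻ y in Ioo (a q) (b q), G q y := by
  have hS : MeasurableSet {p : α × ℝ | a p.1 < p.2 ∧ p.2 < b p.1} :=
    (measurableSet_lt (ha.comp measurable_fst) measurable_snd).inter
      (measurableSet_lt measurable_snd (hb.comp measurable_fst))
  convert (hG.indicator hS).lintegral_prod_right' (ν := volume) using 2 with q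
  rw [← lintegral_indicator measurableSet_Ioo]
  rfl

theorem lintegral_Ioi_lintegral_Ioo_add {G : ℝ → ℝ≥0∞} (hG : Measurable G) (z : ℝ) :
    ∫⁻ x in Ioi 0, ∫⁻ y in Ioo x (x + z), G y = ∫⁻ y in Ioi 0, ENNReal.ofReal (min y z) * G y := by
  set S : Set (ℝ × ℝ) := {q | q.1 < q.2 ∧ q.2 < q.1 + z}
  have hS : MeasurableSet S :=
    (measurableSet_lt measurable_fst measurable_snd).inter
      (measurableSet_lt measurable_snd (measurable_fst.add_const z))
  have hwindow : ∀ x ∈ Ioi (0 : ℝ), ∫⁻ y in Ioo x (x + z), G y =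
      ∫⁻ y in Ioi 0, S.indicator (fun q => G q.2) (x, y) := by
    intro x hx
    rw [← lintegral_indicator measurableSet_Ioo, ← lintegral_indicator measurableSet_Ioi]
    refine lintegral_congr fun y => ?_
    by_cases hy : x < y ∧ y < x + z
    · have : (0 : ℝ) < y := lt_trans hx hy.1
      simp [indicator, S, hy, this]
    · simp [indicator, S, hy]
  rw [setLIntegral_congr_fun measurableSet_Ioi hwindow, lintegral_lintegral_swap
    (f := fun x y => S.indicator (fun q => G q.2) (x, y))
    ((hG.comp measurable_snd).indicator hS).aemeasurable]
  refine setLIntegral_congr_fun measurableSet_Ioi fun y hy => ?_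
  have hslice : ∀ x, S.indicator (fun q => G q.2) (x, y) =
      (Ioo (y - z) y).indicator (fun _ => G y) x := by
    intro x
    simp only [indicator, S, mem_ofPred_eq, mem_Ioo]
    congr 1
    exact propext ⟨fun h => ⟨by linarith [h.2], h.1⟩, fun h => ⟨h.2, by linarith [h.1]⟩⟩
  simp_rw [hslice]
  rw [lintegral_indicator_const measurableSet_Ioo, Measure.restrict_apply measurableSet_Ioo,
    show Ioo (y - z) y ∩ Ioi 0 = Ioo (max 0 (y - z)) y by ext; simp; tauto,
    Real.volume_Ioo, ← min_sub_sub_left, sub_zero, sub_sub_cancel, mul_comm]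

theorem lintegral_Ioi_lintegral_Ioo_add₂ {g : ℝ → ℝ → ℝ≥0∞} (hg : Measurable (Function.uncurry g))
    (z : ℝ) :
    ∫⁻ x1 in Ioi 0, ∫⁻ x2 in Ioi 0, ∫⁻ y1 in Ioo x1 (x1 + z), ∫⁻ y2 in Ioo x2 (x2 + z), g y1 y2 =
      ∫⁻ y1 in Ioi 0, ENNReal.ofReal (min y1 z) *
        ∫⁻ y2 in Ioi 0, ENNReal.ofReal (min y2 z) * g y1 y2 := by
  have hinner : Measurable fun q : ℝ × ℝ => ∫⁻ y2 in Ioo q.1 (q.1 + z), g q.2 y2 :=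
    Measurable.lintegral_Ioo (G := fun (q : ℝ × ℝ) y2 => g q.2 y2)
      (hg.comp (measurable_fst.snd.prodMk measurable_snd)) measurable_fst
      (measurable_fst.add_const z)
  have hslice : Measurable fun y1 => ∫⁻ y2 in Ioi 0, ENNReal.ofReal (min y2 z) * g y1 y2 :=
    ((ENNReal.measurable_ofReal.comp (measurable_snd.min measurable_const)).mul
      hg).lintegral_prod_right'
  rw [← lintegral_Ioi_lintegral_Ioo_add hslice]
  refine lintegral_congr fun x1 => ?_
  rw [lintegral_lintegral_swap hinner.aemeasurable]
  exact lintegral_congr fun y1 => lintegral_Ioi_lintegral_Ioo_add (hg.comp measurable_prodMk_left) z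

theorem lintegral_Ioi_lintegral_lintegral_Ioo_add₂ (ν : Measure ℝ) [SFinite ν]
    {F : ℝ → ℝ → ℝ → ℝ≥0∞} (hF : Measurable fun q : ℝ × ℝ × ℝ => F q.1 q.2.1 q.2.2) :
    ∫⁻ x1 in Ioi 0, ∫⁻ x2 in Ioi 0, ∫⁻ z,
        (∫⁻ y1 in Ioo x1 (x1 + z), ∫⁻ y2 in Ioo x2 (x2 + z), F z y1 y2) ∂ν =
      ∫⁻ z, (∫⁻ y1 in Ioi 0, ENNReal.ofReal (min y1 z) *
        ∫⁻ y2 in Ioi 0, ENNReal.ofReal (min y2 z) * F z y1 y2) ∂ν := by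
  have hwindows : Measurable fun q : ℝ × ℝ × ℝ =>
      ∫⁻ y1 in Ioo q.1 (q.1 + q.2.2), ∫⁻ y2 in Ioo q.2.1 (q.2.1 + q.2.2), F q.2.2 y1 y2 := by
    refine Measurable.lintegral_Ioo (G := fun (q : ℝ × ℝ × ℝ) y1 => _) ?_ measurable_fst
      (measurable_fst.add measurable_snd.snd)
    exact Measurable.lintegral_Ioo (G := fun (q : (ℝ × ℝ × ℝ) × ℝ) y2 => F q.1.2.2 q.2 y2)
      (hF.comp (measurable_fst.fst.snd.snd.prodMk (measurable_fst.snd.prodMk measurable_snd)))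
      measurable_fst.snd.fst (measurable_fst.snd.fst.add measurable_fst.snd.snd)
  calc _ = ∫⁻ x1 in Ioi 0, ∫⁻ z, (∫⁻ x2 in Ioi 0,
        ∫⁻ y1 in Ioo x1 (x1 + z), ∫⁻ y2 in Ioo x2 (x2 + z), F z y1 y2) ∂ν :=
        lintegral_congr fun x1 => lintegral_lintegral_swap
          (hwindows.comp measurable_prodMk_left).aemeasurable
    _ = ∫⁻ z, (∫⁻ x1 in Ioi 0, ∫⁻ x2 in Ioi 0,
        ∫⁻ y1 in Ioo x1 (x1 + z), ∫⁻ y2 in Ioo x2 (x2 + z), F z y1 y2) ∂ν :=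
        lintegral_lintegral_swap (Measurable.aemeasurable <| Measurable.lintegral_prod_right'
          (hwindows.comp (f := fun q : (ℝ × ℝ) × ℝ => (q.1.1, q.2, q.1.2))
            (measurable_fst.fst.prodMk (measurable_snd.prodMk measurable_fst.snd))))
    _ = _ := lintegral_congr fun z => lintegral_Ioi_lintegral_Ioo_add₂ (g := F z)
        (hF.comp measurable_prodMk_left) z

theorem lintegral_Ioo_zero_rpow {a m : ℝ} (ha : -1 < a) (hm : 0 ≤ m) :
    ∫⁻ z in Ioo 0 m, ENNReal.ofReal (z ^ a) = ENNReal.ofReal (m ^ (a + 1) / (a + 1)) := by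
  have hint : IntegrableOn (fun z : ℝ => z ^ a) (Ioo 0 m) := by
    rw [← intervalIntegrable_iff_integrableOn_Ioo_of_le hm]
    exact intervalIntegral.intervalIntegrable_rpow' ha
  rw [← ofReal_integral_eq_lintegral_ofReal hint
    ((ae_restrict_mem measurableSet_Ioo).mono fun z hz => Real.rpow_nonneg hz.1.le a),
    ← integral_Ioc_eq_integral_Ioo, ← intervalIntegral.integral_of_le hm,
    integral_rpow (Or.inl ha), Real.zero_rpow (by linarith), sub_zero]

theorem lintegral_Ioi_rpow_s2 {a m : ℝ} (ha : a < -1) (hm : 0 < m) :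
    ∫⁻ z in Ioi m, ENNReal.ofReal (z ^ a) = ENNReal.ofReal (-m ^ (a + 1) / (a + 1)) := by
  rw [← ofReal_integral_eq_lintegral_ofReal (integrableOn_Ioi_rpow_of_lt ha hm)
    ((ae_restrict_mem measurableSet_Ioi).mono fun z hz => Real.rpow_nonneg (hm.trans hz).le a),
    integral_Ioi_rpow_of_lt ha hm]

theorem lintegral_Ioi_min_mul_rpow_le {r y : ℝ} (hr0 : 0 < r) (hr1 : r < 1) (hy : 0 < y) :
    ∫⁻ z in Ioi 0, ENNReal.ofReal (min y z * z ^ (-1 - r)) ≤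
      ENNReal.ofReal (y ^ (1 - r) / (r * (1 - r))) := by
  have hhead : ∀ z ∈ Ioo 0 y,
      ENNReal.ofReal (min y z * z ^ (-1 - r)) ≤ ENNReal.ofReal (z ^ (-r)) := by
    intro z hz
    refine ENNReal.ofReal_le_ofReal ?_
    calc min y z * z ^ (-1 - r) ≤ z * z ^ (-1 - r) := by
          gcongr
          · exact Real.rpow_nonneg hz.1.le _
          · exact min_le_right _ _
      _ = z ^ (-r) := by
          rw [mul_comm, ← Real.rpow_add_one hz.1.ne']
          ring_nf
  have htail : ∀ z ∈ Ici y, ENNReal.ofReal (min y z * z ^ (-1 - r)) ≤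
      ENNReal.ofReal y * ENNReal.ofReal (z ^ (-1 - r)) := by
    intro z hz
    rw [← ENNReal.ofReal_mul hy.le]
    refine ENNReal.ofReal_le_ofReal ?_
    gcongr
    · exact Real.rpow_nonneg (hy.le.trans hz) _
    · exact min_le_left _ _
  calc ∫⁻ z in Ioi 0, ENNReal.ofReal (min y z * z ^ (-1 - r))
      ≤ ∫⁻ z in Ioo 0 y ∪ Ici y, ENNReal.ofReal (min y z * z ^ (-1 - r)) :=
        lintegral_mono_set fun z hz => (lt_or_ge z y).imp (fun h => ⟨hz, h⟩) id
    _ ≤ (∫⁻ z in Ioo 0 y, ENNReal.ofReal (min y z * z ^ (-1 - r))) +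
        ∫⁻ z in Ici y, ENNReal.ofReal (min y z * z ^ (-1 - r)) := lintegral_union_le _ _ _
    _ ≤ (∫⁻ z in Ioo 0 y, ENNReal.ofReal (z ^ (-r))) +
        ∫⁻ z in Ioi y, ENNReal.ofReal y * ENNReal.ofReal (z ^ (-1 - r)) := by
        rw [setLIntegral_congr Ioi_ae_eq_Ici]
        gcongr ?_ + ?_
        · exact setLIntegral_mono' measurableSet_Ioo hhead
        · exact setLIntegral_mono' measurableSet_Ici htail
    _ = ENNReal.ofReal (y ^ (1 - r) / (r * (1 - r))) := by
        have h1r : 0 < 1 - r := by linarith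
        have hpow : y ^ (1 - r) = y ^ (-r) * y := by
          rw [← Real.rpow_add_one hy.ne']
          ring_nf
        rw [lintegral_const_mul' _ _ ENNReal.ofReal_ne_top,
          lintegral_Ioo_zero_rpow (by linarith) hy.le, lintegral_Ioi_rpow_s2 (by linarith) hy,
          show -1 - r + 1 = -r by ring, show -r + 1 = 1 - r by ring, neg_div_neg_eq,
          ← ENNReal.ofReal_mul hy.le, ← ENNReal.ofReal_add
            (div_nonneg (Real.rpow_nonneg hy.le _) h1r.le) (by positivity), hpow]
        congr 1
        field_simp
        ring

theorem min_le_two_mul_min_min_one {y z : ℝ} (hy : 0 < y) (hz : z ∈ Ioo 0 2) :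
    min y z ≤ 2 * min (min y 1) z := by
  rcases le_total y 1 with h | h
  · rw [min_eq_left h]
    linarith [le_min hy.le hz.1.le]
  · rw [min_eq_right h]
    rcases le_total z 1 with h' | h'
    · rw [min_eq_right h']; linarith [min_le_right y z, hz.1]
    · rw [min_eq_left h']; linarith [min_le_right y z, hz.2]

theorem lintegral_Ioo_min_mul_rpow_le {r y : ℝ} (hr0 : 0 < r) (hr1 : r < 1) (hy : 0 < y) :
    ∫⁻ z in Ioo 0 2, ENNReal.ofReal (min y z * z ^ (-1 - r)) ≤
      ENNReal.ofReal (2 / (r * (1 - r)) * min y 1 ^ (1 - r)) := by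
  have hw : 0 < min y 1 := lt_min hy one_pos
  calc ∫⁻ z in Ioo 0 2, ENNReal.ofReal (min y z * z ^ (-1 - r))
      ≤ ∫⁻ z in Ioo 0 2, ENNReal.ofReal 2 * ENNReal.ofReal (min (min y 1) z * z ^ (-1 - r)) := by
        refine setLIntegral_mono' measurableSet_Ioo fun z hz => ?_
        rw [← ENNReal.ofReal_mul zero_le_two, ← mul_assoc]
        exact ENNReal.ofReal_le_ofReal (mul_le_mul_of_nonneg_right
          (min_le_two_mul_min_min_one hy hz) (Real.rpow_nonneg hz.1.le _))
    _ ≤ ENNReal.ofReal 2 * ∫⁻ z in Ioi 0, ENNReal.ofReal (min (min y 1) z * z ^ (-1 - r)) := by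
        rw [lintegral_const_mul' _ _ ENNReal.ofReal_ne_top]
        gcongr
        exact Ioo_subset_Ioi_self
    _ ≤ ENNReal.ofReal 2 * ENNReal.ofReal (min y 1 ^ (1 - r) / (r * (1 - r))) := by
        gcongr
        exact lintegral_Ioi_min_mul_rpow_le hr0 hr1 hw
    _ = ENNReal.ofReal (2 / (r * (1 - r)) * min y 1 ^ (1 - r)) := by
        rw [← ENNReal.ofReal_mul zero_le_two]
        ring_nf

theorem ofReal_min_mul_ofReal_div_rpow_le {r y z : ℝ} (hz : 0 < z) (a : ℝ) :
    ENNReal.ofReal (min y z) * ENNReal.ofReal (a / z ^ (2 + r)) ≤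
      ENNReal.ofReal (z ^ (-1 - r)) * ENNReal.ofReal a := by
  calc ENNReal.ofReal (min y z) * ENNReal.ofReal (a / z ^ (2 + r))
      ≤ ENNReal.ofReal z * ENNReal.ofReal (a / z ^ (2 + r)) := by
        gcongr
        exact min_le_right y z
    _ = ENNReal.ofReal (z ^ (-1 - r) * a) := by
        rw [← ENNReal.ofReal_mul hz.le, show -1 - r = 1 - (2 + r) by ring, Real.rpow_sub hz,
          Real.rpow_one]
        ring_nf
    _ = ENNReal.ofReal (z ^ (-1 - r)) * ENNReal.ofReal a :=
        ENNReal.ofReal_mul (Real.rpow_nonneg hz.le _)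

/-- Weighted estimate on the first quadrant: the quadruple averaged integral of
`|f|^p / z^(2+sp)` is bounded by the weighted `L^p` norm with weight
`min{x₁,1}^(1-sp)`, with constant depending only on `s` and `p`. -/
theorem stmt2 (p s : ℝ) (hp : 1 < p) (hs0 : 0 < s) (hs : s < 1 / p) :
    ∃ C : ℝ, 0 < C ∧ ∀ f : ℝ → ℝ → ℝ, Measurable (Function.uncurry f) →
      (∫⁻ x1 in Ioi (0 : ℝ), ∫⁻ x2 in Ioi (0 : ℝ), ∫⁻ z in Ioo (0 : ℝ) 2,
        ∫⁻ y1 in Ioo x1 (x1 + z), ∫⁻ y2 in Ioo x2 (x2 + z),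
          ENNReal.ofReal (|f y1 y2| ^ p / z ^ (2 + s * p)))
      ≤ ENNReal.ofReal C *
        ∫⁻ x1 in Ioi (0 : ℝ), ∫⁻ x2 in Ioi (0 : ℝ),
          ENNReal.ofReal (min x1 1 ^ (1 - s * p) * |f x1 x2| ^ p) := by
  have hp0 : 0 < p := one_pos.trans hp
  have hr0 : 0 < s * p := mul_pos hs0 hp0
  have hr1 : s * p < 1 := by rwa [lt_div_iff₀ hp0] at hs
  have hC : 0 < 2 / (s * p * (1 - s * p)) := div_pos two_pos (mul_pos hr0 (by linarith))
  refine ⟨_, hC, fun f hf => ?_⟩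
  set Φ : ℝ → ℝ≥0∞ := fun y1 => ∫⁻ y2 in Ioi 0, ENNReal.ofReal (|f y1 y2| ^ p)
  have hf' : Measurable fun q : ℝ × ℝ => f q.1 q.2 := hf
  have hΦ : Measurable Φ :=
    (by fun_prop : Measurable fun q : ℝ × ℝ => ENNReal.ofReal (|f q.1 q.2| ^ p)).lintegral_prod_right'
  calc _ = ∫⁻ z in Ioo 0 2, ∫⁻ y1 in Ioi 0, ENNReal.ofReal (min y1 z) * ∫⁻ y2 in Ioi 0,
          ENNReal.ofReal (min y2 z) * ENNReal.ofReal (|f y1 y2| ^ p / z ^ (2 + s * p)) :=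
        lintegral_Ioi_lintegral_lintegral_Ioo_add₂ _ (by fun_prop)
    _ ≤ ∫⁻ z in Ioo 0 2, ∫⁻ y1 in Ioi 0, ENNReal.ofReal (min y1 z * z ^ (-1 - s * p)) * Φ y1 := by
        refine setLIntegral_mono' measurableSet_Ioo fun z hz =>
          setLIntegral_mono' measurableSet_Ioi fun y1 hy1 => ?_
        rw [ENNReal.ofReal_mul (le_min hy1.le hz.1.le), mul_assoc]
        gcongr
        exact (lintegral_mono fun y2 => ofReal_min_mul_ofReal_div_rpow_le hz.1 _).trans_eq
          (lintegral_const_mul' _ _ ENNReal.ofReal_ne_top)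
    _ = ∫⁻ y1 in Ioi 0, (∫⁻ z in Ioo 0 2, ENNReal.ofReal (min y1 z * z ^ (-1 - s * p))) * Φ y1 := by
        rw [lintegral_lintegral_swap (by fun_prop)]
        exact lintegral_congr fun y1 => lintegral_mul_const _ (by fun_prop)
    _ ≤ ∫⁻ y1 in Ioi 0,
          ENNReal.ofReal (2 / (s * p * (1 - s * p)) * min y1 1 ^ (1 - s * p)) * Φ y1 :=
        setLIntegral_mono' measurableSet_Ioi fun y1 hy1 => by
          gcongr
          exact lintegral_Ioo_min_mul_rpow_le hr0 hr1 hy1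
    _ = _ := by
        rw [← lintegral_const_mul' _ _ ENNReal.ofReal_ne_top]
        refine setLIntegral_congr_fun measurableSet_Ioi fun y1 hy1 => ?_
        have hw : 0 ≤ min y1 1 ^ (1 - s * p) := Real.rpow_nonneg (le_min hy1.le zero_le_one) _
        rw [ENNReal.ofReal_mul hC.le, mul_assoc, ← lintegral_const_mul' _ _ ENNReal.ofReal_ne_top]
        simp only [← ENNReal.ofReal_mul hw]
end

section
/- Let $b \in C_c^\infty(\mathbb{R}^2)$ with $\mathrm{supp}\, b \subset T$ where $T = \{(x,y) : 0 < x, y,\ x+y < 1\}$, let $k \in \mathbb{N}$, and let $f \in L^p(\mathcal{Q}_1; \min\{x_1,1\}^{1+kp} dx)$ for some $1 < p < \infty$. Define $g_k(\mathbf{x}, z) = z^k \int_{\mathbb{R}^2} b(\mathbf{y}) f(\mathbf{x} + z\mathbf{y})\,d\mathbf{y}$. Then for every $0 < t < 2$, $\int_0^t \int_{\mathcal{Q}_1} |g_k(\mathbf{x}, z)|^p\,d\mathbf{x}\,dz \lesssim_{b,k,p} \int_{\mathcal{Q}_1} \min\{x_1, t\}^{1+kp} |f(\mathbf{x})|^p\,d\mathbf{x}$.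 -/
open MeasureTheory Set
open scoped ENNReal

/-- The open reference triangle in `ℝ²`. -/
def refTri : Set (ℝ × ℝ) := {y : ℝ × ℝ | 0 < y.1 ∧ 0 < y.2 ∧ y.1 + y.2 < 1}

lemma holder_aux {α : Type*} [MeasurableSpace α] (μ : Measure α) (p : ℝ) (hp : 1 < p)
    (h : α → ℝ≥0∞) (hm : Measurable h) :
    (∫⁻ y, h y ∂μ) ^ p ≤ (μ univ) ^ (p - 1) * ∫⁻ y, h y ^ p ∂μ := by
  have hp0 : (0:ℝ) < p := lt_trans one_pos hp
  have hpq : p.HolderConjugate (Real.conjExponent p) := .conjExponent hp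
  have key := ENNReal.lintegral_mul_le_Lp_mul_Lq μ hpq hm.aemeasurable
    (aemeasurable_const (b := (1:ℝ≥0∞)))
  simp only [Pi.mul_apply, mul_one, ENNReal.one_rpow, lintegral_const, one_mul] at key
  have key2 : (∫⁻ y, h y ∂μ) ^ p ≤
      (((∫⁻ y, h y ^ p ∂μ) ^ (1/p)) * ((μ univ) ^ (1/Real.conjExponent p))) ^ p :=
    ENNReal.rpow_le_rpow key (le_of_lt hp0)
  calc (∫⁻ y, h y ∂μ) ^ p ≤ _ := key2
    _ = (μ univ) ^ (p - 1) * ∫⁻ y, h y ^ p ∂μ := by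
        rw [ENNReal.mul_rpow_of_nonneg _ _ (le_of_lt hp0), ← ENNReal.rpow_mul,
          ← ENNReal.rpow_mul, one_div p, inv_mul_cancel₀ (ne_of_gt hp0), ENNReal.rpow_one,
          mul_comm]
        congr 1
        rw [one_div, inv_mul_eq_div, hpq.div_conj_eq_sub_one]

lemma zint_aux (p : ℝ) (hp : 1 < p) (k : ℕ) (t ε y1 u1 : ℝ) (ht : 0 < t)
    (hε : 0 < ε) (hε1 : ε ≤ 1) (hy : ε ≤ y1) :
    ∫⁻ z in Ioo (0:ℝ) t, (if z * y1 < u1 then ENNReal.ofReal ((z ^ k) ^ p) else 0)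
      ≤ ENNReal.ofReal (ε ^ (-(1 + (k:ℝ) * p)) * min u1 t ^ (1 + (k:ℝ) * p)) := by
  have hp0 : (0:ℝ) < p := lt_trans one_pos hp
  have hy1 : (0:ℝ) < y1 := lt_of_lt_of_le hε hy
  rcases le_or_gt u1 0 with hu | hu
  · have : ∀ z ∈ Ioo (0:ℝ) t,
        (if z * y1 < u1 then ENNReal.ofReal ((z ^ k) ^ p) else 0) = 0 := by
      intro z hz
      rw [if_neg]
      exact not_lt.2 (le_trans hu (le_of_lt (mul_pos hz.1 hy1)))
    rw [setLIntegral_congr_fun measurableSet_Ioo this]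
    simp
  · set c := min u1 t with hc
    have hcpos : 0 < c := lt_min hu ht
    set m := min t (u1 / y1) with hm
    have hmpos : 0 < m := lt_min ht (div_pos hu hy1)
    have hme : m * ε ≤ c := by
      refine le_min ?_ ?_
      · calc m * ε ≤ (u1 / y1) * y1 :=
              mul_le_mul (min_le_right _ _) hy (le_of_lt hε) (div_pos hu hy1).le
          _ = u1 := div_mul_cancel₀ _ (ne_of_gt hy1)
      · calc m * ε ≤ t * 1 := mul_le_mul (min_le_left _ _) hε1 (le_of_lt hε) (le_of_lt ht)
          _ = t := mul_one t
    have hmc : m ≤ c / ε := (le_div_iff₀ hε).2 hme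
    have hstep : ∀ z, z ∈ Ioo (0:ℝ) t →
        (if z * y1 < u1 then ENNReal.ofReal ((z ^ k) ^ p) else 0)
          ≤ (Ioo (0:ℝ) m).indicator (fun _ => ENNReal.ofReal ((m ^ k) ^ p)) z := by
      intro z hz
      by_cases hzy : z * y1 < u1
      · rw [if_pos hzy]
        have hzm : z < m := lt_min hz.2 ((lt_div_iff₀ hy1).2 hzy)
        rw [indicator_of_mem (Set.mem_Ioo.2 ⟨hz.1, hzm⟩)]
        exact ENNReal.ofReal_le_ofReal (Real.rpow_le_rpow (pow_nonneg hz.1.le k)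
          (pow_le_pow_left₀ hz.1.le hzm.le k) hp0.le)
      · rw [if_neg hzy]; exact bot_le
    calc ∫⁻ z in Ioo (0:ℝ) t, (if z * y1 < u1 then ENNReal.ofReal ((z ^ k) ^ p) else 0)
        ≤ ∫⁻ z in Ioo (0:ℝ) t,
            (Ioo (0:ℝ) m).indicator (fun _ => ENNReal.ofReal ((m ^ k) ^ p)) z :=
          setLIntegral_mono (measurable_const.indicator measurableSet_Ioo) hstep
      _ ≤ ∫⁻ z, (Ioo (0:ℝ) m).indicator (fun _ => ENNReal.ofReal ((m ^ k) ^ p)) z :=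
          setLIntegral_le_lintegral _ _
      _ = ENNReal.ofReal ((m ^ k) ^ p) * volume (Ioo (0:ℝ) m) := by
          rw [lintegral_indicator measurableSet_Ioo, setLIntegral_const]
      _ = ENNReal.ofReal ((m ^ k) ^ p * m) := by
          rw [Real.volume_Ioo, sub_zero,
            ENNReal.ofReal_mul (Real.rpow_nonneg (pow_nonneg hmpos.le k) p)]
      _ ≤ ENNReal.ofReal (ε ^ (-(1 + (k:ℝ) * p)) * c ^ (1 + (k:ℝ) * p)) := by
          apply ENNReal.ofReal_le_ofReal
          have hce : 0 < c / ε := div_pos hcpos hε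
          have h1 : (m ^ k) ^ p * m ≤ ((c/ε) ^ k) ^ p * (c/ε) :=
            mul_le_mul (Real.rpow_le_rpow (pow_nonneg hmpos.le k)
              (pow_le_pow_left₀ hmpos.le hmc k) hp0.le) hmc hmpos.le
              (Real.rpow_nonneg (pow_nonneg hce.le k) p)
          refine h1.trans (le_of_eq ?_)
          rw [← Real.rpow_natCast (c/ε) k, ← Real.rpow_mul hce.le,
            mul_comm ((c/ε) ^ ((k:ℝ) * p)) (c/ε),
            ← Real.rpow_one_add' (by positivity) (by positivity)]
          rw [Real.div_rpow hcpos.le hε.le, Real.rpow_neg hε.le, div_eq_mul_inv, mul_comm]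

lemma ptwise_aux (p : ℝ) (hp : 1 < p) (k : ℕ) (b : ℝ × ℝ → ℝ) (B : ℝ)
    (hB : ∀ y, |b y| ≤ B) (f : ℝ × ℝ → ℝ) (hf : Measurable f)
    (z : ℝ) (hz : 0 < z) (x : ℝ × ℝ) :
    ENNReal.ofReal (|z ^ k * ∫ y : ℝ × ℝ, b y * f (x.1 + z * y.1, x.2 + z * y.2)| ^ p)
      ≤ ENNReal.ofReal ((z ^ k) ^ p) *
        ((ENNReal.ofReal B ^ p * (volume (tsupport b)) ^ (p - 1)) *
          ∫⁻ y in tsupport b, ENNReal.ofReal (|f (x.1 + z * y.1, x.2 + z * y.2)| ^ p)) := by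
  have hp0 : (0:ℝ) < p := lt_trans one_pos hp
  set g : ℝ × ℝ → ℝ := fun y => f (x.1 + z * y.1, x.2 + z * y.2) with hg
  have mshift : Measurable (fun y : ℝ × ℝ => (x.1 + z * y.1, x.2 + z * y.2)) := by
    fun_prop
  have mg : Measurable g := hf.comp mshift
  set I : ℝ := ∫ y : ℝ × ℝ, b y * g y with hI
  have h1 : |z ^ k * I| ^ p = (z ^ k) ^ p * |I| ^ p := by
    rw [abs_mul, abs_of_nonneg (pow_nonneg hz.le k),
      Real.mul_rpow (pow_nonneg hz.le k) (abs_nonneg I)]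
  rw [h1, ENNReal.ofReal_mul (Real.rpow_nonneg (pow_nonneg hz.le k) p)]
  refine mul_le_mul_right ?_ _
  have h2 : ENNReal.ofReal (|I| ^ p) = (ENNReal.ofReal |I|) ^ p :=
    (ENNReal.ofReal_rpow_of_nonneg (abs_nonneg I) hp0.le).symm
  have h3 : ENNReal.ofReal |I| ≤ ∫⁻ y, (‖b y * g y‖₊ : ℝ≥0∞) := by
    rw [← Real.enorm_eq_ofReal_abs]
    exact enorm_integral_le_lintegral_enorm _
  have h4 : ∫⁻ y, (‖b y * g y‖₊ : ℝ≥0∞)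
      ≤ ∫⁻ y, (tsupport b).indicator
          (fun y => ENNReal.ofReal B * ENNReal.ofReal |g y|) y := by
    refine lintegral_mono fun y => ?_
    by_cases hy : y ∈ tsupport b
    · rw [indicator_of_mem hy, nnnorm_mul, ENNReal.coe_mul,
        ← enorm_eq_nnnorm, ← enorm_eq_nnnorm, Real.enorm_eq_ofReal_abs,
        Real.enorm_eq_ofReal_abs]
      exact mul_le_mul_left (ENNReal.ofReal_le_ofReal (hB y)) _
    · rw [indicator_of_notMem hy, image_eq_zero_of_notMem_tsupport hy]
      simp
  have h5 : ∫⁻ y, (tsupport b).indicator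
        (fun y => ENNReal.ofReal B * ENNReal.ofReal |g y|) y
      = ENNReal.ofReal B * ∫⁻ y in tsupport b, ENNReal.ofReal |g y| := by
    rw [lintegral_indicator (isClosed_tsupport b).measurableSet,
      lintegral_const_mul' _ _ ENNReal.ofReal_ne_top]
  have h6 : (∫⁻ y in tsupport b, ENNReal.ofReal |g y|) ^ p
      ≤ (volume (tsupport b)) ^ (p - 1)
        * ∫⁻ y in tsupport b, (ENNReal.ofReal |g y|) ^ p := by
    have := holder_aux (volume.restrict (tsupport b)) p hp
      (fun y => ENNReal.ofReal |g y|) (mg.abs.ennreal_ofReal)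
    rwa [Measure.restrict_apply_univ] at this
  calc ENNReal.ofReal (|I| ^ p) = (ENNReal.ofReal |I|) ^ p := h2
    _ ≤ (ENNReal.ofReal B * ∫⁻ y in tsupport b, ENNReal.ofReal |g y|) ^ p := by
        refine ENNReal.rpow_le_rpow ?_ hp0.le
        rw [← h5]; exact h3.trans h4
    _ = ENNReal.ofReal B ^ p * (∫⁻ y in tsupport b, ENNReal.ofReal |g y|) ^ p := by
        rw [ENNReal.mul_rpow_of_nonneg _ _ hp0.le]
    _ ≤ ENNReal.ofReal B ^ p * ((volume (tsupport b)) ^ (p - 1)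
          * ∫⁻ y in tsupport b, (ENNReal.ofReal |g y|) ^ p) :=
        mul_le_mul_right h6 _
    _ = (ENNReal.ofReal B ^ p * (volume (tsupport b)) ^ (p - 1)) *
          ∫⁻ y in tsupport b, ENNReal.ofReal (|g y| ^ p) := by
        rw [mul_assoc]
        congr 2
        refine lintegral_congr fun y => ?_
        rw [ENNReal.ofReal_rpow_of_nonneg (abs_nonneg _) hp0.le]

lemma trans_aux (G : ℝ × ℝ → ℝ≥0∞) (z : ℝ) (y : ℝ × ℝ) :
    ∫⁻ x in Ioi (0:ℝ) ×ˢ Ioi (0:ℝ), G (x.1 + z * y.1, x.2 + z * y.2)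
      ≤ ∫⁻ u, (if z * y.1 < u.1 then G u else 0) := by
  set c : ℝ × ℝ := (z * y.1, z * y.2) with hc
  have hmp : MeasurePreserving (fun x : ℝ × ℝ => x + c) volume volume :=
    measurePreserving_add_right volume c
  have hemb : MeasurableEmbedding (fun x : ℝ × ℝ => x + c) :=
    (MeasurableEquiv.addRight c).measurableEmbedding
  have hpre : Ioi (0:ℝ) ×ˢ Ioi (0:ℝ)
      = (fun x : ℝ × ℝ => x + c) ⁻¹' (Ioi (z * y.1) ×ˢ Ioi (z * y.2)) := by
    ext x
    simp [hc, Prod.ext_iff, lt_add_iff_pos_left]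
  have key : ∫⁻ x in Ioi (0:ℝ) ×ˢ Ioi (0:ℝ), G (x.1 + z * y.1, x.2 + z * y.2)
      = ∫⁻ u in Ioi (z * y.1) ×ˢ Ioi (z * y.2), G u := by
    rw [hpre]
    exact hmp.setLIntegral_comp_preimage_emb hemb G _
  rw [key]
  calc ∫⁻ u in Ioi (z * y.1) ×ˢ Ioi (z * y.2), G u
      ≤ ∫⁻ u in {u : ℝ × ℝ | z * y.1 < u.1}, G u :=
        lintegral_mono_set (fun u hu => hu.1)
    _ = ∫⁻ u, (if z * y.1 < u.1 then G u else 0) := by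
        rw [← lintegral_indicator (by exact measurableSet_lt measurable_const measurable_fst)]
        rfl

/-- Weighted `L^p` estimate for `g_k(x,z) = z^k ∫ b(y) f(x+zy) dy` over slabs
`Q₁ × (0,t)` with `0 < t < 2`, with constant depending only on `b`, `k`, `p`. -/
theorem stmt3 (p : ℝ) (hp : 1 < p) (k : ℕ) (hk : 1 ≤ k) (b : ℝ × ℝ → ℝ)
    (hb : ContDiff ℝ (⊤ : ℕ∞) b) (hbsupp : HasCompactSupport b) (hbT : tsupport b ⊆ refTri) :
    ∃ C : ℝ, 0 < C ∧ ∀ f : ℝ × ℝ → ℝ, Measurable f →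
      (∀ x : ℝ × ℝ, x ∉ Ioi (0 : ℝ) ×ˢ Ioi (0 : ℝ) → f x = 0) →
      (∫⁻ x in Ioi (0 : ℝ) ×ˢ Ioi (0 : ℝ),
          ENNReal.ofReal (min x.1 1 ^ (1 + (k : ℝ) * p) * |f x| ^ p)) < ⊤ →
      ∀ t : ℝ, 0 < t → t < 2 →
      (∫⁻ z in Ioo (0 : ℝ) t, ∫⁻ x in Ioi (0 : ℝ) ×ˢ Ioi (0 : ℝ),
          ENNReal.ofReal (|z ^ k * ∫ y : ℝ × ℝ, b y * f (x.1 + z * y.1, x.2 + z * y.2)| ^ p))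
      ≤ ENNReal.ofReal C *
          ∫⁻ x in Ioi (0 : ℝ) ×ˢ Ioi (0 : ℝ),
            ENNReal.ofReal (min x.1 t ^ (1 + (k : ℝ) * p) * |f x| ^ p) := by
  have hp0 : (0:ℝ) < p := lt_trans one_pos hp
  -- bound for b
  obtain ⟨B, hB⟩ := hbsupp.exists_bound_of_continuous hb.continuous
  have hB' : ∀ y, |b y| ≤ B := fun y => by simpa [Real.norm_eq_abs] using hB y
  -- lower bound ε on first coordinate of the support
  obtain ⟨ε, hε, hε1, hεS⟩ : ∃ ε : ℝ, 0 < ε ∧ ε ≤ 1 ∧ ∀ y ∈ tsupport b, ε ≤ y.1 := by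
    by_cases hS : (tsupport b).Nonempty
    · obtain ⟨y₀, hy₀S, hy₀min⟩ := hbsupp.exists_isMinOn hS (continuous_fst.continuousOn)
      refine ⟨min y₀.1 1, lt_min (hbT hy₀S).1 one_pos, min_le_right _ _, fun y hy => ?_⟩
      exact le_trans (min_le_left _ _) (hy₀min hy)
    · exact ⟨1, one_pos, le_refl 1, fun y hy => absurd ⟨y, hy⟩ hS⟩
  set S : Set (ℝ × ℝ) := tsupport b with hSdef
  have hSm : MeasurableSet S := (isClosed_tsupport b).measurableSet
  have hSfin : volume S ≠ ⊤ := hbsupp.measure_lt_top.ne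
  set D : ℝ≥0∞ := ENNReal.ofReal B ^ p * (volume S) ^ (p - 1) with hDdef
  have hDne : D ≠ ⊤ := by
    apply ENNReal.mul_ne_top
    · exact ENNReal.rpow_ne_top_of_nonneg hp0.le ENNReal.ofReal_ne_top
    · exact ENNReal.rpow_ne_top_of_nonneg (by linarith) hSfin
  set K : ℝ≥0∞ := D * volume S * ENNReal.ofReal (ε ^ (-(1 + (k:ℝ) * p))) with hKdef
  have hKne : K ≠ ⊤ :=
    ENNReal.mul_ne_top (ENNReal.mul_ne_top hDne hSfin) ENNReal.ofReal_ne_top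
  refine ⟨K.toReal + 1, by positivity, ?_⟩
  intro f hf hf0 _hfin t ht _ht2
  have hQm : MeasurableSet (Ioi (0:ℝ) ×ˢ Ioi (0:ℝ)) :=
    measurableSet_Ioi.prod measurableSet_Ioi
  set G : ℝ × ℝ → ℝ≥0∞ := fun u => ENNReal.ofReal (|f u| ^ p) with hGdef
  have mG : Measurable G := by rw [hGdef]; fun_prop
  set c0 : ℝ → ℝ≥0∞ := fun z => ENNReal.ofReal ((z ^ k) ^ p) with hc0def
  have mc0 : Measurable c0 := by rw [hc0def]; fun_prop
  have hc0ne : ∀ z, c0 z ≠ ⊤ := fun z => ENNReal.ofReal_ne_top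
  set Ψ : ℝ → ℝ≥0∞ :=
    fun z => ∫⁻ y in S, ∫⁻ u, (if z * y.1 < u.1 then G u else 0) with hΨdef
  -- the per-z estimate
  have step_z : ∀ z ∈ Ioo (0:ℝ) t,
      (∫⁻ x in Ioi (0:ℝ) ×ˢ Ioi (0:ℝ),
        ENNReal.ofReal (|z ^ k * ∫ y : ℝ × ℝ, b y * f (x.1 + z * y.1, x.2 + z * y.2)| ^ p))
      ≤ c0 z * D * Ψ z := by
    intro z hz
    have m1 : Measurable (fun q : (ℝ × ℝ) × (ℝ × ℝ) =>
        G (q.1.1 + z * q.2.1, q.1.2 + z * q.2.2)) := by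
      apply mG.comp; fun_prop
    calc (∫⁻ x in Ioi (0:ℝ) ×ˢ Ioi (0:ℝ),
            ENNReal.ofReal (|z ^ k * ∫ y : ℝ × ℝ, b y * f (x.1 + z * y.1, x.2 + z * y.2)| ^ p))
        ≤ ∫⁻ x in Ioi (0:ℝ) ×ˢ Ioi (0:ℝ),
            c0 z * D * ∫⁻ y in S, G (x.1 + z * y.1, x.2 + z * y.2) := by
          refine lintegral_mono fun x => ?_
          rw [mul_assoc]
          exact ptwise_aux p hp k b B hB' f hf z hz.1 x
      _ = c0 z * D * ∫⁻ x in Ioi (0:ℝ) ×ˢ Ioi (0:ℝ),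
            ∫⁻ y in S, G (x.1 + z * y.1, x.2 + z * y.2) :=
          lintegral_const_mul' _ _ (ENNReal.mul_ne_top (hc0ne z) hDne)
      _ = c0 z * D * ∫⁻ y in S,
            ∫⁻ x in Ioi (0:ℝ) ×ˢ Ioi (0:ℝ), G (x.1 + z * y.1, x.2 + z * y.2) := by
          congr 1
          refine lintegral_lintegral_swap ?_
          exact (m1.comp measurable_id).aemeasurable
      _ ≤ c0 z * D * Ψ z := by
          refine mul_le_mul_right (lintegral_mono fun y => ?_) _
          exact trans_aux G z y
  -- measurability for the swaps
  have mIte : Measurable (fun r : (ℝ × (ℝ × ℝ)) × (ℝ × ℝ) =>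
      if r.1.1 * r.1.2.1 < r.2.1 then G r.2 else 0) := by
    refine Measurable.ite ?_ (mG.comp measurable_snd) measurable_const
    exact measurableSet_lt (by fun_prop) (by fun_prop)
  have mInner : Measurable (fun q : ℝ × (ℝ × ℝ) =>
      ∫⁻ u, (if q.1 * q.2.1 < u.1 then G u else 0)) :=
    Measurable.lintegral_prod_right' (f := fun r : (ℝ × (ℝ × ℝ)) × (ℝ × ℝ) =>
      if r.1.1 * r.1.2.1 < r.2.1 then G r.2 else 0) mIte
  -- main chain
  calc (∫⁻ z in Ioo (0:ℝ) t, ∫⁻ x in Ioi (0:ℝ) ×ˢ Ioi (0:ℝ),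
          ENNReal.ofReal (|z ^ k * ∫ y : ℝ × ℝ, b y * f (x.1 + z * y.1, x.2 + z * y.2)| ^ p))
      ≤ ∫⁻ z in Ioo (0:ℝ) t, c0 z * D * Ψ z :=
        lintegral_mono_ae ((ae_restrict_mem measurableSet_Ioo).mono step_z)
    _ = D * ∫⁻ z in Ioo (0:ℝ) t, c0 z * Ψ z := by
        rw [← lintegral_const_mul' D _ hDne]
        refine lintegral_congr fun z => by ring
    _ = D * ∫⁻ z in Ioo (0:ℝ) t, ∫⁻ y in S,
          c0 z * ∫⁻ u, (if z * y.1 < u.1 then G u else 0) := by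
        congr 1
        refine lintegral_congr fun z => ?_
        rw [hΨdef]
        exact (lintegral_const_mul' _ _ (hc0ne z)).symm
    _ = D * ∫⁻ y in S, ∫⁻ z in Ioo (0:ℝ) t,
          c0 z * ∫⁻ u, (if z * y.1 < u.1 then G u else 0) := by
        congr 1
        refine lintegral_lintegral_swap ?_
        exact ((mc0.comp measurable_fst).mul mInner).aemeasurable
    _ = D * ∫⁻ y in S, ∫⁻ z in Ioo (0:ℝ) t,
          ∫⁻ u, c0 z * (if z * y.1 < u.1 then G u else 0) := by
        congr 1
        refine lintegral_congr fun y => lintegral_congr fun z => ?_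
        exact (lintegral_const_mul' _ _ (hc0ne z)).symm
    _ = D * ∫⁻ y in S, ∫⁻ u, ∫⁻ z in Ioo (0:ℝ) t,
          c0 z * (if z * y.1 < u.1 then G u else 0) := by
        congr 1
        refine lintegral_congr fun y => ?_
        refine lintegral_lintegral_swap ?_
        refine Measurable.aemeasurable ?_
        refine (mc0.comp measurable_fst).mul ?_
        refine Measurable.ite ?_ (mG.comp measurable_snd) measurable_const
        exact measurableSet_lt (by fun_prop) (by fun_prop)
    _ ≤ D * ∫⁻ y in S, ∫⁻ u,
          ENNReal.ofReal (ε ^ (-(1 + (k:ℝ) * p)) * min u.1 t ^ (1 + (k:ℝ) * p)) * G u := by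
        refine mul_le_mul_right (lintegral_mono_ae
          (((ae_restrict_mem hSm).mono fun y hy => lintegral_mono fun u => ?_))) _
        have hrw : ∀ z : ℝ, c0 z * (if z * y.1 < u.1 then G u else 0)
            = (if z * y.1 < u.1 then c0 z else 0) * G u := by
          intro z
          split <;> simp [mul_comm]
        rw [lintegral_congr hrw, lintegral_mul_const' (G u) _ ENNReal.ofReal_ne_top]
        exact mul_le_mul_left (zint_aux p hp k t ε y.1 u.1 ht hε hε1 (hεS y hy)) _
    _ = D * (volume S * ∫⁻ u,
          ENNReal.ofReal (ε ^ (-(1 + (k:ℝ) * p)) * min u.1 t ^ (1 + (k:ℝ) * p)) * G u) := by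
        rw [setLIntegral_const]
        ring
    _ = D * (volume S * (ENNReal.ofReal (ε ^ (-(1 + (k:ℝ) * p))) *
          ∫⁻ x in Ioi (0:ℝ) ×ˢ Ioi (0:ℝ),
            ENNReal.ofReal (min x.1 t ^ (1 + (k:ℝ) * p) * |f x| ^ p))) := by
        congr 2
        calc ∫⁻ u, ENNReal.ofReal (ε ^ (-(1 + (k:ℝ) * p)) * min u.1 t ^ (1 + (k:ℝ) * p)) * G u
            = ∫⁻ u, ENNReal.ofReal (ε ^ (-(1 + (k:ℝ) * p))) *
                ((Ioi (0:ℝ) ×ˢ Ioi (0:ℝ)).indicator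
                  (fun u => ENNReal.ofReal (min u.1 t ^ (1 + (k:ℝ) * p) * |f u| ^ p)) u) := by
              refine lintegral_congr fun u => ?_
              by_cases hu : u ∈ Ioi (0:ℝ) ×ˢ Ioi (0:ℝ)
              · rw [indicator_of_mem hu,
                  ENNReal.ofReal_mul (Real.rpow_nonneg hε.le (-(1 + (k:ℝ) * p))),
                  mul_assoc,
                  ← ENNReal.ofReal_mul (Real.rpow_nonneg (le_min (le_of_lt hu.1) ht.le) _)]
              · rw [indicator_of_notMem hu]
                have hfu : f u = 0 := hf0 u hu
                simp [hGdef, hfu, Real.zero_rpow (ne_of_gt hp0)]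
          _ = ENNReal.ofReal (ε ^ (-(1 + (k:ℝ) * p))) *
                ∫⁻ x in Ioi (0:ℝ) ×ˢ Ioi (0:ℝ),
                  ENNReal.ofReal (min x.1 t ^ (1 + (k:ℝ) * p) * |f x| ^ p) := by
              rw [lintegral_const_mul' _ _ ENNReal.ofReal_ne_top,
                lintegral_indicator hQm]
    _ = K * ∫⁻ x in Ioi (0:ℝ) ×ˢ Ioi (0:ℝ),
          ENNReal.ofReal (min x.1 t ^ (1 + (k:ℝ) * p) * |f x| ^ p) := by
        rw [hKdef]; ring
    _ ≤ ENNReal.ofReal (K.toReal + 1) * ∫⁻ x in Ioi (0:ℝ) ×ˢ Ioi (0:ℝ),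
          ENNReal.ofReal (min x.1 t ^ (1 + (k:ℝ) * p) * |f x| ^ p) := by
        refine mul_le_mul_left ?_ _
        conv_lhs => rw [← ENNReal.ofReal_toReal hKne]
        exact ENNReal.ofReal_le_ofReal (by linarith [ENNReal.toReal_nonneg (a := K)])
end

section
/- For every multi-index $\beta \in \mathbb{N}_0^3$ with $|\beta| \ge 2$, there exist nonnegative constants $c_{\alpha,1}, c_{\alpha,2}, c_{\alpha,3}$ indexed by multi-indices $\alpha \in \mathbb{N}_0^3$ with $\alpha_j \le \beta_j$ and $|\alpha| \ge 2$, such that for all $(x_1, x_2)$ in the open reference triangle $T = \{0 < x_1, x_2,\ x_1 + x_2 < 1\}$, $\frac{1}{x_1^{\beta_1} x_2^{\beta_2} (1-x_1-x_2)^{\beta_3}} = \sum_{\alpha} \left( \frac{c_{\alpha,1}}{x_1^{\alpha_1} x_2^{\alpha_2}} + \frac{c_{\alpha,2}}{x_1^{\alpha_1} (1-x_1-x_2)^{\alpha_3}} + \frac{c_{\alpha,3}}{x_2^{\alpha_2} (1-x_1-x_2)^{\alpha_3}} \right)$. -/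
/-!
Because `ω₀ + ω₁ + ω₂ = 1`, we have
`1 / ∏ ωⱼ ^ βⱼ = ∑ᵢ ωᵢ / ∏ ωⱼ ^ βⱼ = ∑ᵢ 1 / ∏ ωⱼ ^ (β - eᵢ)ⱼ`,
which lowers `|β|` by one with coefficient `1`. Iterating until some exponent vanishes leaves
only fractions in two of the three coordinates, with nonnegative (integer) coefficients.
-/

open Finset

lemma one_div_prod_pow_eq_sum {ι K : Type*} [Fintype ι] [DecidableEq ι] [Field K]
    {ω : ι → K} (hω : ∀ i, ω i ≠ 0) (hsum : ∑ i, ω i = 1) {β : ι → ℕ} (hβ : ∀ i, β i ≠ 0) :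
    1 / ∏ j, ω j ^ β j = ∑ i, 1 / ∏ j, ω j ^ (β - Pi.single i 1 : ι → ℕ) j := by
  have hsplit (i : ι) : ∏ j, ω j ^ β j = ω i * ∏ j, ω j ^ (β - Pi.single i 1 : ι → ℕ) j := by
    rw [← Fintype.prod_ite_eq' i ω, ← prod_mul_distrib]
    refine prod_congr rfl fun j _ => ?_
    rcases eq_or_ne j i with rfl | hj
    · rw [if_pos rfl, Pi.sub_apply, Pi.single_eq_same, ← pow_succ',
        Nat.sub_add_cancel (Nat.one_le_iff_ne_zero.mpr (hβ j))]
    · simp [hj]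
  calc 1 / ∏ j, ω j ^ β j = (∑ i, ω i) / ∏ j, ω j ^ β j := by rw [hsum]
    _ = ∑ i, 1 / ∏ j, ω j ^ (β - Pi.single i 1 : ι → ℕ) j := by
      rw [sum_div]
      refine sum_congr rfl fun i _ => ?_
      rw [hsplit i, div_mul_cancel_left₀ (hω i), one_div]

namespace PairExpansion

/-- Barycentric coordinates `(ω₀, ω₁, ω₂)` of the points of the plane off the three lines
`ωᵢ = 0`; the open reference triangle is the part where all three are positive. -/
def domain : Set (Fin 3 → ℝ) := {ω | (∀ i, ω i ≠ 0) ∧ ∑ i, ω i = 1}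

def admissible (β : Fin 3 → ℕ) : Finset (Fin 3 → ℕ) :=
  (Icc 0 β).filter fun α => 2 ≤ α 0 + α 1 + α 2

/-- The summand of index `α`: `c α j` is the coefficient of the fraction omitting `ω_{2-j}`. -/
noncomputable def pairFractions (c : (Fin 3 → ℕ) → Fin 3 → ℝ) (ω : Fin 3 → ℝ)
    (α : Fin 3 → ℕ) : ℝ :=
  c α 0 / (ω 0 ^ α 0 * ω 1 ^ α 1) + c α 1 / (ω 0 ^ α 0 * ω 2 ^ α 2) +
    c α 2 / (ω 1 ^ α 1 * ω 2 ^ α 2)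

def Expands (β : Fin 3 → ℕ) (f : (Fin 3 → ℝ) → ℝ) : Prop :=
  ∃ c, 0 ≤ c ∧ Set.EqOn f (fun ω => ∑ α ∈ admissible β, pairFractions c ω α) domain

lemma admissible_mono {β β' : Fin 3 → ℕ} (h : β' ≤ β) : admissible β' ⊆ admissible β :=
  filter_subset_filter _ (Icc_subset_Icc le_rfl h)

lemma pairFractions_sum {ι : Type*} (s : Finset ι) (c : ι → (Fin 3 → ℕ) → Fin 3 → ℝ)
    (ω : Fin 3 → ℝ) (α : Fin 3 → ℕ) :
    pairFractions (∑ i ∈ s, c i) ω α = ∑ i ∈ s, pairFractions (c i) ω α := by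
  simp only [pairFractions, Finset.sum_apply, sum_div, sum_add_distrib]

variable {β : Fin 3 → ℕ} {f : (Fin 3 → ℝ) → ℝ}

lemma Expands.congr {g : (Fin 3 → ℝ) → ℝ} (h : Expands β f) (hfg : Set.EqOn f g domain) :
    Expands β g :=
  let ⟨c, hc, hf⟩ := h
  ⟨c, hc, hfg.symm.trans hf⟩

lemma Expands.sum {ι : Type*} [Fintype ι] {f : ι → (Fin 3 → ℝ) → ℝ}
    (h : ∀ i, Expands β (f i)) : Expands β fun ω => ∑ i, f i ω := by
  choose c hc hf using h
  refine ⟨∑ i, c i, sum_nonneg fun i _ => hc i, fun ω hω => ?_⟩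
  simp only [hf _ hω, pairFractions_sum]
  exact sum_comm

lemma Expands.of_le {β' : Fin 3 → ℕ} (h : β' ≤ β) (hf : Expands β' f) : Expands β f := by
  classical
  obtain ⟨c, hc, hfc⟩ := hf
  refine ⟨fun α => if α ∈ admissible β' then c α else 0, fun α => ?_, fun ω hω => ?_⟩
  · dsimp only
    split_ifs
    exacts [hc α, le_rfl]
  have hterm (α : Fin 3 → ℕ) : pairFractions (fun α => if α ∈ admissible β' then c α else 0) ω α =
      if α ∈ admissible β' then pairFractions c ω α else 0 := by
    split_ifs <;> simp [pairFractions, *]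
  simp only [hfc hω, hterm, sum_ite_mem, inter_eq_right.mpr (admissible_mono h)]

lemma mem_admissible_self (hβ : 2 ≤ β 0 + β 1 + β 2) : β ∈ admissible β := by
  simp [admissible, hβ]

/-- When `β` has a zero entry, `1 / ∏ ωᵢ ^ βᵢ` is itself one of the pair fractions. -/
lemma expands_one_div_prod_pow_of_eq_zero (hβ : 2 ≤ β 0 + β 1 + β 2) {k : Fin 3}
    (hk : β k = 0) : Expands β fun ω => 1 / ∏ i, ω i ^ β i := by
  refine ⟨Pi.single β (Pi.single k.rev 1),
    Pi.single_nonneg.mpr (Pi.single_nonneg.mpr zero_le_one), fun ω _ => ?_⟩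
  dsimp only
  rw [sum_eq_single_of_mem β (mem_admissible_self hβ) fun α _ hα => by simp [pairFractions, hα]]
  fin_cases k <;> simp_all [pairFractions, Fin.prod_univ_three]

theorem expands_one_div_prod_pow (hβ : 2 ≤ β 0 + β 1 + β 2) :
    Expands β fun ω => 1 / ∏ i, ω i ^ β i := by
  induction hn : β 0 + β 1 + β 2 using Nat.strong_induction_on generalizing β with
  | _ n ih =>
  by_cases hzero : ∃ k, β k = 0
  · obtain ⟨k, hk⟩ := hzero
    exact expands_one_div_prod_pow_of_eq_zero hβ hk
  push Not at hzero
  have hlower (i : Fin 3) :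
      Expands β fun ω => 1 / ∏ j, ω j ^ (β - Pi.single i 1 : Fin 3 → ℕ) j := by
    have := hzero 0; have := hzero 1; have := hzero 2
    refine (ih (n - 1) (by omega) ?_ ?_).of_le tsub_le_self <;>
      fin_cases i <;> simp <;> omega
  exact (Expands.sum hlower).congr fun ω hω => (one_div_prod_pow_eq_sum hω.1 hω.2 hzero).symm

end PairExpansion

open PairExpansion in
/-- Partial fraction decomposition of `1/(ω₁^β₁ ω₂^β₂ ω₃^β₃)` on the reference
triangle, where `ω₁ = x₁`, `ω₂ = x₂`, `ω₃ = 1 - x₁ - x₂`: there exist nonnegative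
constants `c_{α,j}`, indexed by multi-indices `α ≤ β` with `|α| ≥ 2`, realizing
the two-factor decomposition. -/
theorem stmt4 (β : Fin 3 → ℕ) (hβ : 2 ≤ β 0 + β 1 + β 2) :
    ∃ c : (Fin 3 → ℕ) → Fin 3 → ℝ, (∀ α j, 0 ≤ c α j) ∧
      ∀ x1 x2 : ℝ, 0 < x1 → 0 < x2 → x1 + x2 < 1 →
        1 / (x1 ^ β 0 * x2 ^ β 1 * (1 - x1 - x2) ^ β 2) =
          ∑ α ∈ (Finset.Icc 0 β).filter (fun α => 2 ≤ α 0 + α 1 + α 2),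
            (c α 0 / (x1 ^ α 0 * x2 ^ α 1) +
              c α 1 / (x1 ^ α 0 * (1 - x1 - x2) ^ α 2) +
              c α 2 / (x2 ^ α 1 * (1 - x1 - x2) ^ α 2)) := by
  obtain ⟨c, hc, hexp⟩ := expands_one_div_prod_pow hβ
  refine ⟨c, hc, fun x1 x2 hx1 hx2 hx12 => ?_⟩
  have hdomain : ![x1, x2, 1 - x1 - x2] ∈ domain := by
    refine ⟨fun i => ?_, by simp [Fin.sum_univ_three]⟩
    fin_cases i <;> simp <;> linarith
  simpa [Fin.prod_univ_three, pairFractions, admissible] using hexp hdomain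
end

section
/- For $x_1 > 0$, $1 - x_1 + x_2 > 0$, and $x_2 > 0$, the integral $A(x_1, x_2) := \int_T \frac{x_2}{[(x_1 - y_1)^2 + (x_2 + y_2)^2]^{3/2}}\,d\mathbf{y}$ over the reference triangle $T = \{0 < y_1, y_2,\ y_1 + y_2 < 1\}$ equals $\frac{x_1\sqrt{x_2^2 + (1-x_1)^2} + (1-x_1+x_2)\sqrt{x_1^2+x_2^2} - x_2\sqrt{(1+x_2)^2 + x_1^2}}{x_1(1-x_1+x_2)}$. -/
/-!
Integrate first in `y₁`. With `s = y₁ - x₁` and `u = x₂ + y₂`, the integrand `x₂ (s² + u²)^{-3/2}`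
has the primitive `x₂ s / (u² √(s² + u²))` in `s`. At the two ends of the inner range,
`s = -x₁` and `s = (1 - x₁ + x₂) - u`, `s` is affine in `u`, and along a line `s = m - k u` the
function `s / (u² √(s² + u²))` has the primitive `-√(s² + u²) / (m u)` in `u`. Evaluating at
`u = x₂` and `u = 1 + x₂` gives the closed form; the two terms at `u = 1 + x₂` merge into one
because both lines pass through the vertex `(0, 1)`.
-/

open MeasureTheory Set

lemma setIntegral_prod_eq_integral_setIntegral_slice {α β E : Type*} [MeasurableSpace α]
    [MeasurableSpace β] [NormedAddCommGroup E] [NormedSpace ℝ E] {μ : Measure α} {ν : Measure β}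
    [SFinite μ] [SFinite ν] {s : Set (α × β)} (hs : MeasurableSet s) {f : α × β → E}
    (hf : IntegrableOn f s (μ.prod ν)) :
    ∫ p in s, f p ∂(μ.prod ν) = ∫ y, ∫ x in (fun x => (x, y)) ⁻¹' s, f (x, y) ∂μ ∂ν := by
  rw [← integral_indicator hs, integral_prod_symm _ ((integrable_indicator_iff hs).2 hf)]
  congr with y
  rw [← integral_indicator (measurable_prodMk_right hs)]
  rfl

lemma isOpen_refTri : IsOpen refTri :=
  (isOpen_lt continuous_const continuous_fst).inter
    ((isOpen_lt continuous_const continuous_snd).inter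
      (isOpen_lt (continuous_fst.add continuous_snd) continuous_const))

lemma setIntegral_refTri {f : ℝ × ℝ → ℝ} (hf : IntegrableOn f refTri) :
    ∫ y in refTri, f y = ∫ y₂ in Ioo 0 1, ∫ y₁ in Ioo 0 (1 - y₂), f (y₁, y₂) := by
  rw [Measure.volume_eq_prod,
    setIntegral_prod_eq_integral_setIntegral_slice isOpen_refTri.measurableSet hf,
    ← setIntegral_eq_integral_of_forall_compl_eq_zero (s := Ioo 0 1)]
  · refine setIntegral_congr_fun measurableSet_Ioo fun y₂ ⟨hy₂, _⟩ => ?_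
    congr 2 with y₁
    simp only [refTri, mem_preimage, mem_ofPred_eq, mem_Ioo]
    constructor
    · rintro ⟨hy₁, -, hsum⟩; exact ⟨hy₁, by linarith⟩
    · rintro ⟨hy₁, hsum⟩; exact ⟨hy₁, hy₂, by linarith⟩
  · intro y₂ hy₂
    have empty_slice : (fun y₁ => (y₁, y₂)) ⁻¹' refTri = ∅ := by
      ext y₁
      simp only [refTri, mem_preimage, mem_ofPred_eq, mem_empty_iff_false, iff_false]
      rintro ⟨hy₁, hy₂', hsum⟩
      exact hy₂ ⟨hy₂', by linarith⟩
    simp [empty_slice]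

lemma integrableOn_refTri_kernel (x1 : ℝ) {x2 : ℝ} (h2 : 0 < x2) :
    IntegrableOn (fun y : ℝ × ℝ => x2 / ((x1 - y.1) ^ 2 + (x2 + y.2) ^ 2) ^ ((3 : ℝ) / 2)) refTri := by
  have hK : IsCompact (Icc (0 : ℝ) 1 ×ˢ Icc (0 : ℝ) 1) := isCompact_Icc.prod isCompact_Icc
  refine (ContinuousOn.integrableOn_compact hK ?_).mono_set ?_
  · exact continuousOn_const.div (by fun_prop (disch := norm_num))
      fun y ⟨_, hy, _⟩ => by positivity
  · rintro ⟨a, b⟩ ⟨ha, hb, hab⟩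
    exact ⟨⟨ha.le, by linarith⟩, ⟨hb.le, by linarith⟩⟩

lemma rpow_three_halves {v : ℝ} (hv : 0 ≤ v) : v ^ ((3 : ℝ) / 2) = v * √v := by
  rw [show (3 : ℝ) / 2 = 1 + 1 / 2 by norm_num, Real.rpow_add' hv (by norm_num), Real.rpow_one,
    Real.sqrt_eq_rpow]

noncomputable def innerPrimitive (s u : ℝ) : ℝ := s / (u ^ 2 * √(s ^ 2 + u ^ 2))

noncomputable def outerPrimitive (m k u : ℝ) : ℝ := -√((m - k * u) ^ 2 + u ^ 2) / (m * u)

lemma hasDerivAt_innerPrimitive (s : ℝ) {u : ℝ} (hu : u ≠ 0) :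
    HasDerivAt (innerPrimitive · u) (((s ^ 2 + u ^ 2) ^ ((3 : ℝ) / 2))⁻¹) s := by
  have hq : 0 < s ^ 2 + u ^ 2 := by positivity
  have hsqrt : HasDerivAt (fun s => √(s ^ 2 + u ^ 2)) (2 * s / (2 * √(s ^ 2 + u ^ 2))) s := by
    simpa using (((hasDerivAt_id' s).pow 2).add_const (u ^ 2)).sqrt hq.ne'
  refine ((hasDerivAt_id' s).div (hsqrt.const_mul (u ^ 2)) (by positivity)).congr_deriv ?_
  rw [rpow_three_halves hq.le]
  field_simp
  rw [Real.sq_sqrt hq.le]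
  ring

lemma hasDerivAt_outerPrimitive {m : ℝ} (k : ℝ) (hm : m ≠ 0) {u : ℝ} (hu : u ≠ 0) :
    HasDerivAt (outerPrimitive m k) (innerPrimitive (m - k * u) u) u := by
  have hq : 0 < (m - k * u) ^ 2 + u ^ 2 := by positivity
  have hsqrt : HasDerivAt (fun u => √((m - k * u) ^ 2 + u ^ 2))
      ((2 * (m - k * u) * -k + 2 * u) / (2 * √((m - k * u) ^ 2 + u ^ 2))) u := by
    have := ((((hasDerivAt_id' u).const_mul k).const_sub m).pow 2).add ((hasDerivAt_id' u).pow 2)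
    simpa using this.sqrt hq.ne'
  refine (hsqrt.neg.div ((hasDerivAt_id' u).const_mul m) (by simp [hm, hu])).congr_deriv ?_
  simp only [innerPrimitive, Pi.neg_apply]
  field_simp
  rw [Real.sq_sqrt hq.le]
  ring

lemma setIntegral_Ioo_eq_sub_of_hasDerivAt {f f' : ℝ → ℝ} {a b : ℝ} (hab : a ≤ b)
    (hderiv : ∀ x ∈ Icc a b, HasDerivAt f (f' x) x) (hcont : ContinuousOn f' (Icc a b)) :
    ∫ x in Ioo a b, f' x = f b - f a := by
  rw [← integral_Ioc_eq_integral_Ioo, ← intervalIntegral.integral_of_le hab,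
    intervalIntegral.integral_eq_sub_of_hasDerivAt (by rwa [uIcc_of_le hab])
      (hcont.intervalIntegrable_of_Icc hab)]

lemma setIntegral_Ioo_kernel (b c : ℝ) {a L : ℝ} (ha : a ≠ 0) (hL : 0 ≤ L) :
    ∫ t in Ioo 0 L, b / ((c - t) ^ 2 + a ^ 2) ^ ((3 : ℝ) / 2)
      = b * (innerPrimitive (L - c) a - innerPrimitive (-c) a) := by
  rw [mul_sub, ← zero_sub]
  refine setIntegral_Ioo_eq_sub_of_hasDerivAt (f := fun t => b * innerPrimitive (t - c) a) hL
    (fun t _ => ?_) ?_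
  · refine (((hasDerivAt_innerPrimitive (t - c) ha).comp_sub_const t c).const_mul b).congr_deriv ?_
    rw [sub_sq_comm, ← div_eq_mul_inv]
  · exact (continuous_const.div (by fun_prop (disch := norm_num))
      fun t => by positivity).continuousOn

lemma setIntegral_Ioo_innerPrimitive {x1 x2 : ℝ} (h1 : 0 < x1) (h2 : 0 < x2)
    (h3 : 0 < 1 - x1 + x2) :
    ∫ y in Ioo 0 1, x2 * (innerPrimitive (1 - y - x1) (x2 + y) - innerPrimitive (-x1) (x2 + y))
      = (x1 * √(x2 ^ 2 + (1 - x1) ^ 2) + (1 - x1 + x2) * √(x1 ^ 2 + x2 ^ 2)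
          - x2 * √((1 + x2) ^ 2 + x1 ^ 2)) / (x1 * (1 - x1 + x2)) := by
  have hG : ∀ (m k : ℝ), m ≠ 0 → ∀ y ∈ Icc (0 : ℝ) 1,
      HasDerivAt (fun y => outerPrimitive m k (x2 + y))
        (innerPrimitive (m - k * (x2 + y)) (x2 + y)) y :=
    fun m k hm y hy => (hasDerivAt_outerPrimitive k hm (by linarith [hy.1])).comp_const_add x2 y
  refine (setIntegral_Ioo_eq_sub_of_hasDerivAt zero_le_one (fun y hy => ?_) ?_
    (f := fun y => x2 * (outerPrimitive (1 - x1 + x2) 1 (x2 + y) - outerPrimitive (-x1) 0 (x2 + y)))).trans ?_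
  · exact (((hG _ 1 h3.ne' y hy).sub (hG _ 0 (neg_ne_zero.2 h1.ne') y hy)).const_mul x2).congr_deriv
      (by ring_nf)
  · unfold innerPrimitive
    fun_prop (disch := rintro y ⟨hy, -⟩; positivity)
  · simp only [outerPrimitive]
    rw [show (1 - x1 + x2 - 1 * (x2 + 1)) ^ 2 + (x2 + 1) ^ 2 = (1 + x2) ^ 2 + x1 ^ 2 by ring,
      show (-x1 - 0 * (x2 + 1)) ^ 2 + (x2 + 1) ^ 2 = (1 + x2) ^ 2 + x1 ^ 2 by ring,
      show (1 - x1 + x2 - 1 * (x2 + 0)) ^ 2 + (x2 + 0) ^ 2 = x2 ^ 2 + (1 - x1) ^ 2 by ring,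
      show (-x1 - 0 * (x2 + 0)) ^ 2 + (x2 + 0) ^ 2 = x1 ^ 2 + x2 ^ 2 by ring]
    field_simp
    ring

/-- Explicit evaluation of the kernel integral
`A(x) = ∫_T x₂ / ((x₁-y₁)² + (x₂+y₂)²)^{3/2} dy` over the reference triangle. -/
theorem stmt5 (x1 x2 : ℝ) (h1 : 0 < x1) (h2 : 0 < x2) (h3 : 0 < 1 - x1 + x2) :
    (∫ y in refTri, x2 / ((x1 - y.1) ^ 2 + (x2 + y.2) ^ 2) ^ ((3 : ℝ) / 2))
      = (x1 * Real.sqrt (x2 ^ 2 + (1 - x1) ^ 2)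
          + (1 - x1 + x2) * Real.sqrt (x1 ^ 2 + x2 ^ 2)
          - x2 * Real.sqrt ((1 + x2) ^ 2 + x1 ^ 2)) / (x1 * (1 - x1 + x2)) := by
  rw [setIntegral_refTri (integrableOn_refTri_kernel x1 h2)]
  calc _ = ∫ y₂ in Ioo 0 1,
        x2 * (innerPrimitive (1 - y₂ - x1) (x2 + y₂) - innerPrimitive (-x1) (x2 + y₂)) :=
        setIntegral_congr_fun measurableSet_Ioo fun y₂ ⟨hy₀, hy₁⟩ =>
          setIntegral_Ioo_kernel x2 x1 (by linarith) (by linarith)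
    _ = _ := setIntegral_Ioo_innerPrimitive h1 h2 h3
end

section
/- Let $k \in \mathbb{N}_0$, $b \in C_c^\infty(T)$, and define for $f \in C^\infty(\bar{T})$ the function $\mathcal{E}_k(f)(\mathbf{x}, z) = \frac{(-z)^k}{k!} \int_T b(\mathbf{y}) f(\mathbf{x}+z\mathbf{y})\,d\mathbf{y}$ on the reference tetrahedron $K = \{(x_1,x_2,z) : 0 < x_1,x_2,z,\ x_1+x_2+z<1\}$. Then for $0 \le m \le k$, the trace of $\partial_z^m \mathcal{E}_k(f)$ on the face $z = 0$ equals $\delta_{mk} \left(\int_T b(\mathbf{x})\,d\mathbf{x}\right) f(-1)^k$, i.e., $\partial_z^m \mathcal{E}_k(f)(\mathbf{x}, 0) = 0$ for $m < k$ and $\partial_z^k \mathcal{E}_k(f)(\mathbf{x}, 0) = (-1)^k \left(\int_T b\right) f(\mathbf{x})$. -/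
open MeasureTheory Set
open scoped Convolution ContDiff

private lemma iteratedDeriv_add_aux {m : ℕ} {A B : ℝ → ℝ} (hA : ContDiff ℝ ∞ A)
    (hB : ContDiff ℝ ∞ B) (z : ℝ) :
    iteratedDeriv m (fun t => A t + B t) z = iteratedDeriv m A z + iteratedDeriv m B z := by
  rw [← iteratedDerivWithin_univ, ← iteratedDerivWithin_univ, ← iteratedDerivWithin_univ]
  exact iteratedDerivWithin_add (mem_univ z) uniqueDiffOn_univ
    (hA.contDiffWithinAt.of_le (by exact_mod_cast le_top))
    (hB.contDiffWithinAt.of_le (by exact_mod_cast le_top))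

private lemma iteratedDeriv_const_mul_aux {m : ℕ} {A : ℝ → ℝ} (hA : ContDiff ℝ ∞ A)
    (c : ℝ) (z : ℝ) :
    iteratedDeriv m (fun t => c * A t) z = c * iteratedDeriv m A z := by
  rw [← iteratedDerivWithin_univ, ← iteratedDerivWithin_univ]
  exact iteratedDerivWithin_const_mul (mem_univ z) uniqueDiffOn_univ c
    (hA.contDiffWithinAt.of_le (by exact_mod_cast le_top))

private lemma pow_mul_iteratedDeriv (m : ℕ) : ∀ k : ℕ, m ≤ k → ∀ F : ℝ → ℝ, ContDiff ℝ ∞ F →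
    iteratedDeriv m (fun z : ℝ => z ^ k * F z) 0
      = if m = k then (Nat.factorial k : ℝ) * F 0 else 0 := by
  induction m with
  | zero =>
    intro k hk F hF
    rw [iteratedDeriv_zero]
    by_cases h : 0 = k
    · subst h; simp
    · have hk0 : k ≠ 0 := fun hh => h hh.symm
      simp [zero_pow hk0, h]
  | succ m ih =>
    intro k hk F hF
    obtain ⟨j, rfl⟩ : ∃ j, k = j + 1 := ⟨k - 1, by omega⟩
    have hF' : ContDiff ℝ ∞ (deriv F) := (contDiff_infty_iff_deriv.mp hF).2
    have hd : deriv (fun z : ℝ => z ^ (j + 1) * F z)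
        = fun z => ((j : ℝ) + 1) * (z ^ j * F z) + z ^ (j + 1) * deriv F z := by
      funext z
      rw [deriv_fun_mul (differentiableAt_pow _) (((hF.differentiable (by simp)) z)),
        deriv_pow_field]
      push_cast
      ring
    have hpow : ContDiff ℝ ∞ (fun z : ℝ => z ^ j) := contDiff_id.pow j
    have hpow1 : ContDiff ℝ ∞ (fun z : ℝ => z ^ (j + 1)) := contDiff_id.pow (j + 1)
    have hA : ContDiff ℝ ∞ (fun z : ℝ => ((j : ℝ) + 1) * (z ^ j * F z)) :=
      contDiff_const.mul (hpow.mul hF)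
    have hB : ContDiff ℝ ∞ (fun z : ℝ => z ^ (j + 1) * deriv F z) :=
      hpow1.mul hF'
    rw [iteratedDeriv_succ', hd, iteratedDeriv_add_aux hA hB,
      iteratedDeriv_const_mul_aux (hpow.mul hF),
      ih j (by omega) F hF, ih (j + 1) (by omega) (deriv F) hF']
    have hmj : m ≠ j + 1 := by omega
    by_cases h : m = j
    · subst h
      simp only [if_pos rfl, if_neg hmj, Nat.factorial_succ]
      push_cast
      ring
    · have h' : m + 1 ≠ j + 1 := by omega
      simp [h, hmj, h']

/-- Trace property of the lifting operator `𝓔ₖ`: all normal (i.e. `z`-)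
derivatives of order `m ≤ k` of `𝓔ₖ(f)(x,z) = (-z)^k/k! ∫_T b(y) f(x+zy) dy`
vanish on the face `z = 0` except the `k`-th, which equals `(-1)^k (∫_T b) f`. -/
theorem stmt8 (k : ℕ) (b f : ℝ × ℝ → ℝ) (hb : ContDiff ℝ (⊤ : ℕ∞) b)
    (hbsupp : HasCompactSupport b) (hbT : tsupport b ⊆ refTri)
    (hf : ContDiff ℝ (⊤ : ℕ∞) f) (m : ℕ) (hm : m ≤ k) (x : ℝ × ℝ) (hx : x ∈ refTri) :
    iteratedDeriv m (fun z : ℝ => (-z) ^ k / (Nat.factorial k : ℝ) *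
        ∫ y in refTri, b y * f (x.1 + z * y.1, x.2 + z * y.2)) 0
      = if m = k then (-1) ^ k * (∫ y in refTri, b y) * f x else 0 := by
  classical
  have hb' : ContDiff ℝ ∞ b := hb.of_le (by simp)
  have hf' : ContDiff ℝ ∞ f := hf.of_le (by simp)
  set L : ℝ →L[ℝ] ℝ →L[ℝ] ℝ := ContinuousLinearMap.mul ℝ ℝ with hL
  set g : ℝ → (ℝ × ℝ) → ℝ :=
    fun p t => b (-t) * f (x.1 - p * t.1, x.2 - p * t.2) with hgdef
  set F : ℝ → ℝ := fun p => ((fun _ : ℝ × ℝ => (1 : ℝ)) ⋆[L, volume] g p) 0 with hFdef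
  -- smoothness of the uncurried integrand
  have hgsmooth : ContDiff ℝ ∞ (Function.uncurry g) := by
    apply ContDiff.mul
    · exact hb'.comp contDiff_snd.neg
    · exact hf'.comp ((contDiff_const.sub (contDiff_fst.mul contDiff_snd.fst)).prodMk
        (contDiff_const.sub (contDiff_fst.mul contDiff_snd.snd)))
  have hgs : ∀ p t, p ∈ (univ : Set ℝ) → t ∉ -tsupport b → g p t = 0 := by
    intro p t _ ht
    have h1 : -t ∉ tsupport b := fun h => ht (Set.mem_neg.mpr h)
    simp [hgdef, image_eq_zero_of_notMem_tsupport h1]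
  have hconv : ContDiffOn ℝ (⊤ : ℕ∞)
      (fun q : ℝ × (ℝ × ℝ) => ((fun _ : ℝ × ℝ => (1 : ℝ)) ⋆[L, volume] g q.1) q.2)
      (univ ×ˢ univ) :=
    contDiffOn_convolution_right_with_param L isOpen_univ hbsupp.isCompact.neg hgs
      (locallyIntegrable_const (1 : ℝ)) (hgsmooth.contDiffOn)
  have hF : ContDiff ℝ ∞ F := by
    have h2 : ContDiff ℝ ∞
        (fun q : ℝ × (ℝ × ℝ) => ((fun _ : ℝ × ℝ => (1 : ℝ)) ⋆[L, volume] g q.1) q.2) := by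
      rw [← contDiffOn_univ]
      simpa [Set.univ_prod_univ] using hconv
    exact h2.comp (contDiff_id.prodMk contDiff_const)
  have Fval : ∀ p : ℝ, F p = ∫ t : ℝ × ℝ, b t * f (x.1 + p * t.1, x.2 + p * t.2) := by
    intro p
    show ((fun _ : ℝ × ℝ => (1 : ℝ)) ⋆[L, volume] g p) 0 = _
    rw [convolution_def]
    simp only [hL, ContinuousLinearMap.mul_apply', one_mul, hgdef, zero_sub, Prod.fst_neg,
      Prod.snd_neg, neg_neg, mul_neg, sub_neg_eq_add]
  have hvanish : ∀ p : ℝ, ∀ y : ℝ × ℝ, y ∉ refTri →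
      b y * f (x.1 + p * y.1, x.2 + p * y.2) = 0 := by
    intro p y hy
    rw [image_eq_zero_of_notMem_tsupport (fun h => hy (hbT h)), zero_mul]
  have hset : ∀ p : ℝ, (∫ y in refTri, b y * f (x.1 + p * y.1, x.2 + p * y.2)) = F p := by
    intro p
    rw [setIntegral_eq_integral_of_forall_compl_eq_zero (hvanish p), Fval p]
  have hbint : (∫ y in refTri, b y) = ∫ y : ℝ × ℝ, b y :=
    setIntegral_eq_integral_of_forall_compl_eq_zero
      (fun y hy => image_eq_zero_of_notMem_tsupport (fun h => hy (hbT h)))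
  have F0 : F 0 = (∫ y : ℝ × ℝ, b y) * f x := by
    rw [Fval 0]
    simp only [zero_mul, add_zero]
    rw [← integral_mul_const]
  have hfun : (fun z : ℝ => (-z) ^ k / (Nat.factorial k : ℝ) *
        ∫ y in refTri, b y * f (x.1 + z * y.1, x.2 + z * y.2))
      = fun z : ℝ => ((-1 : ℝ) ^ k / (Nat.factorial k : ℝ)) * (z ^ k * F z) := by
    funext z
    rw [hset z, neg_pow]
    ring
  have hpowk : ContDiff ℝ ∞ (fun z : ℝ => z ^ k) := contDiff_id.pow k
  rw [hfun, iteratedDeriv_const_mul_aux (hpowk.mul hF),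
    pow_mul_iteratedDeriv m k hm F hF]
  by_cases h : m = k
  · rw [if_pos h, if_pos h, F0, hbint]
    have hk0 : (Nat.factorial k : ℝ) ≠ 0 := Nat.cast_ne_zero.mpr (Nat.factorial_ne_zero k)
    field_simp
  · rw [if_neg h, if_neg h, mul_zero]
end

section
/- Let $\chi \in C_c^\infty(\mathbb{R})$, $b \in C_c^\infty(\mathbb{R}^2)$, $1 < p < \infty$, and $i \in \{1,2\}$. For all $f \in C_c^\infty(\mathbb{R}^2)$, with $\tilde{\mathcal{E}}_0(g)(\mathbf{x},z) = \chi(z)\int_{\mathbb{R}^2} b(\mathbf{y}) g(\mathbf{x}+z\mathbf{y})\,d\mathbf{y}$, there holds $\|\tilde{\mathcal{E}}_0(\partial_i f)\|_{L^p(\mathbb{R}^3_+)}^p \lesssim_{\chi,b,p} \int_0^\infty \int_{\mathbb{R}^2} \frac{|f(\mathbf{x}) - f(\mathbf{x} + t\mathbf{e}_i)|^p}{t^p}\,d\mathbf{x}\,dt$, and hence $\|\tilde{\mathcal{E}}_0(\partial_i f)\|_{L^p(\mathbb{R}^3_+)} \lesssim_{\chi,b,p} \|f\|_{W^{1-1/p,p}(\mathbb{R}^2)}$.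 -/
open MeasureTheory Set
open scoped ENNReal

/-- The standard unit vectors of `ℝ²` (as `ℝ × ℝ`). -/
def unitVec (i : Fin 2) : ℝ × ℝ := if i = 0 then (1, 0) else (0, 1)

noncomputable def coordL (i : Fin 2) : (ℝ × ℝ) →L[ℝ] ℝ :=
  if i = 0 then ContinuousLinearMap.fst ℝ ℝ ℝ else ContinuousLinearMap.snd ℝ ℝ ℝ
noncomputable def projL (i : Fin 2) : (ℝ × ℝ) →L[ℝ] (ℝ × ℝ) :=
  ContinuousLinearMap.id ℝ (ℝ × ℝ) - (coordL i).smulRight (unitVec i)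
lemma projL_apply (i : Fin 2) (y : ℝ × ℝ) :
    projL i y = y - coordL i y • unitVec i := rfl
lemma coordL_unitVec (i : Fin 2) : coordL i (unitVec i) = 1 := by
  fin_cases i <;> simp [coordL, unitVec]
lemma projL_unitVec (i : Fin 2) : projL i (unitVec i) = 0 := by
  rw [projL_apply, coordL_unitVec, one_smul, sub_self]

lemma key_identity (b f : ℝ × ℝ → ℝ) (hb : ContDiff ℝ (⊤ : ℕ∞) b) (hbs : HasCompactSupport b)
    (hf : ContDiff ℝ (⊤ : ℕ∞) f) (hfs : HasCompactSupport f) (i : Fin 2) (x : ℝ × ℝ) {z : ℝ}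
    (hz : z ≠ 0) :
    ∫ y : ℝ × ℝ, b y * fderiv ℝ f (x + z • y) (unitVec i)
      = z⁻¹ * ∫ y : ℝ × ℝ,
          fderiv ℝ b y (unitVec i) * (f (x + z • projL i y) - f (x + z • y)) := by
  have hfd : Differentiable ℝ f := hf.differentiable (by simp)
  have hbd : Differentiable ℝ b := hb.differentiable (by simp)
  have hfc : Continuous f := hf.continuous
  have hbc : Continuous b := hb.continuous
  have hDc : Continuous fun y => fderiv ℝ b y (unitVec i) :=
    (hb.continuous_fderiv (by simp)).clm_apply continuous_const
  have hDs : HasCompactSupport fun y => fderiv ℝ b y (unitVec i) :=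
    hbs.fderiv_apply ℝ (unitVec i)
  -- the two inner affine maps
  have haff1 : ∀ y : ℝ × ℝ, HasFDerivAt (fun y : ℝ × ℝ => x + z • y)
      (z • ContinuousLinearMap.id ℝ (ℝ × ℝ)) y := fun y => by
    simpa using ((hasFDerivAt_id y).const_smul z).const_add x
  have haff2 : ∀ y : ℝ × ℝ, HasFDerivAt (fun y : ℝ × ℝ => x + z • projL i y)
      (z • projL i) y := fun y => by
    simpa using (((projL i).hasFDerivAt (x := y)).const_smul z).const_add x
  set g₁ : ℝ × ℝ → ℝ := fun y => f (x + z • y) with hg₁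
  set g₂ : ℝ × ℝ → ℝ := fun y => f (x + z • projL i y) with hg₂
  have hg₁d : Differentiable ℝ g₁ := fun y => ((hfd _).hasFDerivAt.comp y (haff1 y)).differentiableAt
  have hg₂d : Differentiable ℝ g₂ := fun y => ((hfd _).hasFDerivAt.comp y (haff2 y)).differentiableAt
  have Hg₁ : ∀ y : ℝ × ℝ, HasFDerivAt g₁
      ((fderiv ℝ f (x + z • y)).comp (z • ContinuousLinearMap.id ℝ (ℝ × ℝ))) y := fun y =>
    (hfd _).hasFDerivAt.comp y (haff1 y)
  have Hg₂ : ∀ y : ℝ × ℝ, HasFDerivAt g₂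
      ((fderiv ℝ f (x + z • projL i y)).comp (z • projL i)) y := fun y =>
    (hfd _).hasFDerivAt.comp y (haff2 y)
  have hg₁' : ∀ y, fderiv ℝ g₁ y (unitVec i) = z * fderiv ℝ f (x + z • y) (unitVec i) := by
    intro y
    rw [(Hg₁ y).fderiv]
    simp [_root_.map_smul]
  have hg₂' : ∀ y, fderiv ℝ g₂ y (unitVec i) = 0 := by
    intro y
    rw [(Hg₂ y).fderiv]
    simp [projL_unitVec, _root_.map_smul]
  have hg₁c : Continuous g₁ :=
    hfc.comp (continuous_const.add (continuous_id.const_smul z))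
  have hg₂c : Continuous g₂ :=
    hfc.comp (continuous_const.add ((projL i).continuous.const_smul z))
  -- integrability helpers
  have int1 : ∀ (h : ℝ × ℝ → ℝ), Continuous h →
      Integrable (fun y => b y * h y) volume := fun h hc =>
    (hbc.mul hc).integrable_of_hasCompactSupport (hbs.mul_right)
  have int2 : ∀ (h : ℝ × ℝ → ℝ), Continuous h →
      Integrable (fun y => fderiv ℝ b y (unitVec i) * h y) volume := fun h hc =>
    (hDc.mul hc).integrable_of_hasCompactSupport (hDs.mul_right)
  have ibp1 : ∫ y : ℝ × ℝ, b y * fderiv ℝ g₁ y (unitVec i)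
      = - ∫ y : ℝ × ℝ, fderiv ℝ b y (unitVec i) * g₁ y := by
    apply integral_mul_fderiv_eq_neg_fderiv_mul_of_integrable
    · exact int2 _ hg₁c
    · have hc : Continuous fun y : ℝ × ℝ => z * fderiv ℝ f (x + z • y) (unitVec i) :=
        continuous_const.mul (((hf.continuous_fderiv (by simp)).comp
          (continuous_const.add (continuous_id.const_smul z))).clm_apply continuous_const)
      exact (int1 _ hc).congr (ae_of_all _ fun y => by simp only [hg₁' y])
    · exact int1 _ hg₁c
    · exact fun y _ => hbd y
    · exact fun y _ => hg₁d y
  have ibp2 : ∫ y : ℝ × ℝ, b y * fderiv ℝ g₂ y (unitVec i)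
      = - ∫ y : ℝ × ℝ, fderiv ℝ b y (unitVec i) * g₂ y := by
    apply integral_mul_fderiv_eq_neg_fderiv_mul_of_integrable
    · exact int2 _ hg₂c
    · exact (int1 (fun _ => (0:ℝ)) continuous_const).congr
        (ae_of_all _ fun y => by simp only [hg₂' y, mul_zero])
    · exact int1 _ hg₂c
    · exact fun y _ => hbd y
    · exact fun y _ => hg₂d y
  have e2 : ∫ y : ℝ × ℝ, fderiv ℝ b y (unitVec i) * g₂ y = 0 := by
    have := ibp2
    simp only [hg₂', mul_zero, integral_zero] at this
    linarith [this]
  have e1 : z * ∫ y : ℝ × ℝ, b y * fderiv ℝ f (x + z • y) (unitVec i)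
      = - ∫ y : ℝ × ℝ, fderiv ℝ b y (unitVec i) * g₁ y := by
    rw [← ibp1]
    simp only [hg₁']
    rw [← integral_const_mul]
    congr 1
    funext y
    ring
  have esub : ∫ y : ℝ × ℝ, fderiv ℝ b y (unitVec i) * (g₂ y - g₁ y)
      = - ∫ y : ℝ × ℝ, fderiv ℝ b y (unitVec i) * g₁ y := by
    have : ∀ y : ℝ × ℝ, fderiv ℝ b y (unitVec i) * (g₂ y - g₁ y)
        = fderiv ℝ b y (unitVec i) * g₂ y - fderiv ℝ b y (unitVec i) * g₁ y := fun y => by ring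
    rw [funext this, integral_sub (int2 _ hg₂c) (int2 _ hg₁c), e2, zero_sub]
  rw [← esub] at e1
  field_simp
  rw [mul_comm]
  exact e1

lemma decomp (i : Fin 2) (y : ℝ × ℝ) :
    y = projL i y + coordL i y • unitVec i := by
  rw [projL_apply, sub_add_cancel]


lemma holder_pointwise {α : Type*} [MeasurableSpace α] {μ : Measure α} (w g : α → ℝ)
    (hw : AEMeasurable w μ) (hg : AEMeasurable g μ) {p : ℝ} (hp : 1 < p) :
    ENNReal.ofReal (|∫ a, w a * g a ∂μ| ^ p)
      ≤ (∫⁻ a, ENNReal.ofReal |w a| ∂μ) ^ (p - 1)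
          * ∫⁻ a, ENNReal.ofReal |w a| * ENNReal.ofReal (|g a| ^ p) ∂μ := by
  have hp0 : (0:ℝ) < p := lt_trans one_pos hp
  have hpne : p ≠ 0 := ne_of_gt hp0
  set W : α → ℝ≥0∞ := fun a => ENNReal.ofReal |w a| with hW
  set H : α → ℝ≥0∞ := fun a => ENNReal.ofReal |g a| with hH
  have hWm : AEMeasurable W μ := ENNReal.measurable_ofReal.comp_aemeasurable (continuous_abs.measurable.comp_aemeasurable hw)
  have hHm : AEMeasurable H μ := ENNReal.measurable_ofReal.comp_aemeasurable (continuous_abs.measurable.comp_aemeasurable hg)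
  have hHp : ∀ a, ENNReal.ofReal (|g a| ^ p) = H a ^ p := fun a =>
    (ENNReal.ofReal_rpow_of_nonneg (abs_nonneg _) hp0.le).symm
  have step2 : ENNReal.ofReal |∫ a, w a * g a ∂μ| ≤ ∫⁻ a, W a * H a ∂μ := by
    calc ENNReal.ofReal |∫ a, w a * g a ∂μ| = (‖∫ a, w a * g a ∂μ‖₊ : ℝ≥0∞) := by
          rw [← Real.enorm_eq_ofReal_abs, enorm_eq_nnnorm]
      _ ≤ ∫⁻ a, (‖w a * g a‖₊ : ℝ≥0∞) ∂μ := enorm_integral_le_lintegral_enorm _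
      _ = ∫⁻ a, W a * H a ∂μ := by
          congr 1
          funext a
          simp only [hW, hH, ← Real.enorm_eq_ofReal_abs, enorm_eq_nnnorm, ← ENNReal.coe_mul, nnnorm_mul]
  have step3 : ∫⁻ a, W a * H a ∂μ
      ≤ (∫⁻ a, W a ∂μ) ^ (1 - 1/p) * (∫⁻ a, W a * H a ^ p ∂μ) ^ (1/p) := by
    have h1 : (0:ℝ) ≤ 1 - 1/p := by
      have : 1/p < 1 := by rw [div_lt_one hp0]; exact hp
      linarith
    have h2 : (0:ℝ) ≤ 1/p := by positivity
    have h3 : (1 - 1/p) + 1/p = 1 := by ring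
    have := ENNReal.lintegral_mul_norm_pow_le (μ := μ) hWm
      (hWm.mul (hHm.pow_const p)) h1 h2 h3
    refine le_trans (le_of_eq ?_) this
    congr 1
    funext a
    simp only [Pi.mul_apply]
    rw [ENNReal.mul_rpow_of_nonneg _ _ h2, ← ENNReal.rpow_mul,
      mul_one_div_cancel hpne, ENNReal.rpow_one, ← mul_assoc,
      ← ENNReal.rpow_add_of_nonneg _ _ h1 h2, h3, ENNReal.rpow_one]
  calc ENNReal.ofReal (|∫ a, w a * g a ∂μ| ^ p)
      = ENNReal.ofReal |∫ a, w a * g a ∂μ| ^ p :=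
        (ENNReal.ofReal_rpow_of_nonneg (abs_nonneg _) hp0.le).symm
    _ ≤ ((∫⁻ a, W a ∂μ) ^ (1 - 1/p) * (∫⁻ a, W a * H a ^ p ∂μ) ^ (1/p)) ^ p :=
        ENNReal.rpow_le_rpow (le_trans step2 step3) hp0.le
    _ = (∫⁻ a, W a ∂μ) ^ (p - 1) * ∫⁻ a, W a * H a ^ p ∂μ := by
        rw [ENNReal.mul_rpow_of_nonneg _ _ hp0.le, ← ENNReal.rpow_mul, ← ENNReal.rpow_mul]
        have e1 : (1 - 1/p) * p = p - 1 := by field_simp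
        have e2 : 1/p * p = 1 := by field_simp
        rw [e1, e2, ENNReal.rpow_one]
    _ = (∫⁻ a, W a ∂μ) ^ (p - 1) * ∫⁻ a, W a * ENNReal.ofReal (|g a| ^ p) ∂μ := by
        simp_rw [hHp]

lemma lintegral_Ioi_comp_mul (F : ℝ → ℝ≥0∞) (hF : Measurable F) {s : ℝ} (hs : 0 < s) :
    ∫⁻ z in Ioi (0 : ℝ), F (s * z) = ENNReal.ofReal s⁻¹ * ∫⁻ t in Ioi (0 : ℝ), F t := by
  have hmap : Measure.map (fun z : ℝ => s * z) volume = ENNReal.ofReal |s⁻¹| • volume :=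
    Real.map_volume_mul_left (ne_of_gt hs)
  have h1 : ∫⁻ z in Ioi (0:ℝ), F (s * z)
      = ∫⁻ z, (Ioi (0:ℝ)).indicator F (s * z) := by
    rw [← lintegral_indicator measurableSet_Ioi]
    congr 1; funext z
    by_cases hz : 0 < z
    · rw [indicator_of_mem (mem_Ioi.2 hz), indicator_of_mem (mem_Ioi.2 (mul_pos hs hz))]
    · have hz' : z ≤ 0 := not_lt.1 hz
      have h2 : s * z ∉ Ioi (0:ℝ) := by
        simp only [mem_Ioi, not_lt]
        exact mul_nonpos_of_nonneg_of_nonpos hs.le hz'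
      rw [indicator_of_notMem (by simpa using hz), indicator_of_notMem h2]
  rw [h1, ← lintegral_map (hF.indicator measurableSet_Ioi) (measurable_const_mul s), hmap,
    lintegral_smul_measure, lintegral_indicator measurableSet_Ioi, abs_of_pos (by positivity), smul_eq_mul]

lemma scale_lemma {p : ℝ} (hp : 1 < p) (G : ℝ → ℝ≥0∞) (hG : Measurable G)
    (hGeven : ∀ t, G (-t) = G t) (hG0 : G 0 = 0) (c : ℝ) :
    ∫⁻ z in Ioi (0 : ℝ), ENNReal.ofReal ((z⁻¹) ^ p) * G (z * c)
      ≤ ENNReal.ofReal (|c| ^ (p - 1))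
          * ∫⁻ t in Ioi (0 : ℝ), ENNReal.ofReal ((t⁻¹) ^ p) * G t := by
  by_cases hc : c = 0
  · simp [hc, hG0]
  set s : ℝ := |c| with hsdef
  have hs : 0 < s := abs_pos.2 hc
  set F : ℝ → ℝ≥0∞ := fun t => ENNReal.ofReal ((t⁻¹) ^ p) * G t with hFdef
  have hFm : Measurable F :=
    (ENNReal.measurable_ofReal.comp (measurable_inv.pow_const p)).mul hG
  have key : ∫⁻ z in Ioi (0 : ℝ), ENNReal.ofReal ((z⁻¹) ^ p) * G (z * c)
      = ENNReal.ofReal (s ^ p) * ∫⁻ z in Ioi (0:ℝ), F (s * z) := by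
    rw [← lintegral_const_mul' _ _ (by exact ENNReal.ofReal_ne_top)]
    refine setLIntegral_congr_fun measurableSet_Ioi (fun z hz => ?_)
    have hz0 : 0 < z := hz
    have hGc : G (z * c) = G (s * z) := by
      rcases abs_cases c with ⟨h1, _⟩ | ⟨h1, _⟩
      · rw [hsdef, h1, mul_comm]
      · rw [hsdef, h1, ← hGeven (z * c)]; ring_nf
    have hinv : ((s * z)⁻¹) ^ p = (s⁻¹) ^ p * (z⁻¹) ^ p := by
      rw [mul_inv, Real.mul_rpow (by positivity) (by positivity)]
    rw [hGc, hFdef]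
    simp only
    rw [hinv, ENNReal.ofReal_mul (by positivity), ← mul_assoc, ← mul_assoc,
      ← ENNReal.ofReal_mul (by positivity), ← Real.mul_rpow hs.le (by positivity),
      mul_inv_cancel₀ (ne_of_gt hs), Real.one_rpow, ENNReal.ofReal_one, one_mul]
  rw [key, lintegral_Ioi_comp_mul F hFm hs, ← mul_assoc, ← ENNReal.ofReal_mul (by positivity)]
  have : s ^ p * s⁻¹ = s ^ (p - 1) := by
    rw [← Real.rpow_neg_one s, ← Real.rpow_add hs, ← sub_eq_add_neg]
  rw [this]

/-- Stability of the lifting of a partial derivative: for `f ∈ C_c^∞(ℝ²)`,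
`‖𝓔̃₀(∂ᵢ f)‖_{L^p(ℝ³₊)}^p` is bounded by the directional Gagliardo-type integral
`∫₀^∞ ∫_{ℝ²} |f(x+t eᵢ) - f(x)|^p / t^p dx dt`, hence by the
`W^{1-1/p,p}(ℝ²)`-norm of `f` (characterized by the directional integrals). -/
theorem stmt10 (p : ℝ) (hp : 1 < p) (χ : ℝ → ℝ) (hχ : ContDiff ℝ (⊤ : ℕ∞) χ)
    (hχs : HasCompactSupport χ) (b : ℝ × ℝ → ℝ) (hb : ContDiff ℝ (⊤ : ℕ∞) b)
    (hbs : HasCompactSupport b) (i : Fin 2) :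
    ∃ C : ℝ, 0 < C ∧ ∀ f : ℝ × ℝ → ℝ, ContDiff ℝ (⊤ : ℕ∞) f → HasCompactSupport f →
      ((∫⁻ z in Ioi (0 : ℝ), ∫⁻ x : ℝ × ℝ,
          ENNReal.ofReal (|χ z * ∫ y : ℝ × ℝ, b y * fderiv ℝ f (x + z • y) (unitVec i)| ^ p))
        ≤ ENNReal.ofReal C *
            ∫⁻ t in Ioi (0 : ℝ), ∫⁻ x : ℝ × ℝ,
              ENNReal.ofReal (|f (x + t • unitVec i) - f x| ^ p / t ^ p)) ∧
      ((∫⁻ z in Ioi (0 : ℝ), ∫⁻ x : ℝ × ℝ,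
          ENNReal.ofReal (|χ z * ∫ y : ℝ × ℝ, b y * fderiv ℝ f (x + z • y) (unitVec i)| ^ p))
        ≤ ENNReal.ofReal C *
            ((∫⁻ x : ℝ × ℝ, ENNReal.ofReal (|f x| ^ p)) +
              ∑ j : Fin 2, ∫⁻ t in Ioi (0 : ℝ), ∫⁻ x : ℝ × ℝ,
                ENNReal.ofReal (|f (x + t • unitVec j) - f x| ^ p / t ^ p))) := by
  have hp0 : (0:ℝ) < p := lt_trans one_pos hp
  have hp1 : (0:ℝ) ≤ p - 1 := by linarith
  -- bound on χ
  obtain ⟨Cχ, hCχn⟩ := hχs.exists_bound_of_continuous hχ.continuous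
  have hCχ : ∀ z, |χ z| ≤ Cχ := fun z => by simpa [Real.norm_eq_abs] using hCχn z
  have hCχ0 : (0:ℝ) ≤ Cχ := le_trans (abs_nonneg _) (hCχ 0)
  -- the derivative of b in direction i
  set D : ℝ × ℝ → ℝ := fun y => fderiv ℝ b y (unitVec i) with hDdef
  have hDc : Continuous D := (hb.continuous_fderiv (by simp)).clm_apply continuous_const
  have hDs : HasCompactSupport D := hbs.fderiv_apply ℝ (unitVec i)
  have hDint : Integrable D volume := hDc.integrable_of_hasCompactSupport hDs
  set A' : ℝ := ∫ y : ℝ × ℝ, |D y| with hA'def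
  have hA'0 : (0:ℝ) ≤ A' := integral_nonneg fun y => abs_nonneg _
  have hA : ∫⁻ y : ℝ × ℝ, ENNReal.ofReal |D y| = ENNReal.ofReal A' :=
    (ofReal_integral_eq_lintegral_ofReal hDint.abs (ae_of_all _ fun y => abs_nonneg _)).symm
  have hcabs : Continuous fun y : ℝ × ℝ => |coordL i y| ^ (p - 1) :=
    ((coordL i).continuous.abs).rpow_const fun y => Or.inr hp1
  have hB'int : Integrable (fun y : ℝ × ℝ => |D y| * |coordL i y| ^ (p-1)) volume := by
    apply Continuous.integrable_of_hasCompactSupport (hDc.abs.mul hcabs)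
    exact (hDs.comp_left (g := fun r : ℝ => |r|) abs_zero).mul_right
  set B' : ℝ := ∫ y : ℝ × ℝ, |D y| * |coordL i y| ^ (p - 1) with hB'def
  have hB'0 : (0:ℝ) ≤ B' := integral_nonneg fun y => by positivity
  refine ⟨Cχ ^ p * A' ^ (p - 1) * B' + 1, by positivity, ?_⟩
  intro f hf hfs
  have hfc : Continuous f := hf.continuous
  -- the Gagliardo kernel in direction i
  set G : ℝ → ℝ≥0∞ :=
    fun t => ∫⁻ x : ℝ × ℝ, ENNReal.ofReal (|f (x + t • unitVec i) - f x| ^ p) with hGdef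
  have hcont2 : Continuous fun q : ℝ × (ℝ × ℝ) => |f (q.2 + q.1 • unitVec i) - f q.2| ^ p :=
    ((hfc.comp (continuous_snd.add (continuous_fst.smul continuous_const))).sub
      (hfc.comp continuous_snd)).abs.rpow_const fun q => Or.inr hp0.le
  have hGmeas : Measurable G :=
    Measurable.lintegral_prod_right (ENNReal.measurable_ofReal.comp hcont2.measurable)
  have hGeven : ∀ t, G (-t) = G t := by
    intro t
    have h2 : ∀ x : ℝ × ℝ, (x + t • unitVec i) + (-t) • unitVec i = x := fun x => by
      rw [neg_smul, add_neg_cancel_right]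
    calc G (-t) = ∫⁻ x : ℝ × ℝ,
          ENNReal.ofReal (|f ((x + t • unitVec i) + (-t) • unitVec i)
            - f (x + t • unitVec i)| ^ p) :=
          (lintegral_add_right_eq_self
            (fun x : ℝ × ℝ => ENNReal.ofReal (|f (x + (-t) • unitVec i) - f x| ^ p))
            (t • unitVec i)).symm
      _ = G t := by
          simp_rw [h2]
          congr 1; funext x; rw [abs_sub_comm]
  have hG0 : G 0 = 0 := by
    simp [hGdef, Real.zero_rpow (ne_of_gt hp0)]
  -- the target quantity
  set T : ℝ≥0∞ := ∫⁻ t in Ioi (0:ℝ), ENNReal.ofReal ((t⁻¹) ^ p) * G t with hTdef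
  have hT : ∫⁻ t in Ioi (0 : ℝ), ∫⁻ x : ℝ × ℝ,
      ENNReal.ofReal (|f (x + t • unitVec i) - f x| ^ p / t ^ p) = T := by
    refine setLIntegral_congr_fun measurableSet_Ioi (fun t ht => ?_)
    have ht0 : (0:ℝ) < t := ht
    have h1 : ∀ x : ℝ × ℝ, ENNReal.ofReal (|f (x + t • unitVec i) - f x| ^ p / t ^ p)
        = ENNReal.ofReal (|f (x + t • unitVec i) - f x| ^ p) * ENNReal.ofReal ((t⁻¹) ^ p) := by
      intro x
      rw [div_eq_mul_inv, ← Real.inv_rpow ht0.le, ENNReal.ofReal_mul (by positivity)]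
    simp_rw [h1]
    rw [lintegral_mul_const' _ _ ENNReal.ofReal_ne_top, mul_comm]
  set K₁ : ℝ≥0∞ := ENNReal.ofReal (Cχ ^ p) * ENNReal.ofReal (A' ^ (p - 1)) with hK₁def
  have hK₁ne : K₁ ≠ ⊤ := by
    rw [hK₁def]; exact ENNReal.mul_ne_top ENNReal.ofReal_ne_top ENNReal.ofReal_ne_top
  -- pointwise-in-z estimate
  have stepA : ∀ z : ℝ, z ∈ Ioi (0:ℝ) →
      (∫⁻ x : ℝ × ℝ, ENNReal.ofReal
          (|χ z * ∫ y : ℝ × ℝ, b y * fderiv ℝ f (x + z • y) (unitVec i)| ^ p))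
        ≤ K₁ * (ENNReal.ofReal ((z⁻¹) ^ p)
            * ∫⁻ y : ℝ × ℝ, ENNReal.ofReal |D y| * G (z * coordL i y)) := by
    intro z hz
    have hz0 : (0:ℝ) < z := hz
    set Δ : ℝ × ℝ → ℝ × ℝ → ℝ :=
      fun x y => f (x + z • projL i y) - f (x + z • y) with hΔdef
    have hΔcont : Continuous fun q : (ℝ × ℝ) × (ℝ × ℝ) => Δ q.1 q.2 := by
      apply Continuous.sub
      · exact hfc.comp (continuous_fst.add (((projL i).continuous.comp continuous_snd).const_smul z))
      · exact hfc.comp (continuous_fst.add (continuous_snd.const_smul z))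
    have hstep1 : ∀ x : ℝ × ℝ, ENNReal.ofReal
        (|χ z * ∫ y : ℝ × ℝ, b y * fderiv ℝ f (x + z • y) (unitVec i)| ^ p)
        ≤ (ENNReal.ofReal (Cχ ^ p) * ENNReal.ofReal ((z⁻¹) ^ p) * ENNReal.ofReal (A' ^ (p-1)))
            * ∫⁻ y : ℝ × ℝ, ENNReal.ofReal |D y| * ENNReal.ofReal (|Δ x y| ^ p) := by
      intro x
      rw [key_identity b f hb hbs hf hfs i x (ne_of_gt hz0)]
      have habs : |χ z * (z⁻¹ * ∫ y : ℝ × ℝ, D y * Δ x y)| ^ p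
          = |χ z| ^ p * ((z⁻¹) ^ p * |∫ y : ℝ × ℝ, D y * Δ x y| ^ p) := by
        rw [abs_mul, abs_mul, abs_of_pos (inv_pos.2 hz0),
          Real.mul_rpow (abs_nonneg _) (by positivity),
          Real.mul_rpow (by positivity) (abs_nonneg _)]
      rw [habs, ENNReal.ofReal_mul (by positivity), ENNReal.ofReal_mul (by positivity)]
      have hH := holder_pointwise (μ := volume) D (Δ x)
        hDc.aemeasurable (hΔcont.comp (continuous_const.prodMk continuous_id)).aemeasurable hp
      rw [hA] at hH
      have hA2 : ENNReal.ofReal A' ^ (p - 1) = ENNReal.ofReal (A' ^ (p-1)) :=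
        ENNReal.ofReal_rpow_of_nonneg hA'0 hp1
      rw [hA2] at hH
      calc ENNReal.ofReal (|χ z| ^ p) * (ENNReal.ofReal ((z⁻¹) ^ p)
            * ENNReal.ofReal (|∫ y : ℝ × ℝ, D y * Δ x y| ^ p))
          ≤ ENNReal.ofReal (Cχ ^ p) * (ENNReal.ofReal ((z⁻¹) ^ p)
            * (ENNReal.ofReal (A' ^ (p-1))
                * ∫⁻ y : ℝ × ℝ, ENNReal.ofReal |D y| * ENNReal.ofReal (|Δ x y| ^ p))) := by
            refine mul_le_mul' (ENNReal.ofReal_le_ofReal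
              (Real.rpow_le_rpow (abs_nonneg _) (hCχ z) hp0.le)) (mul_le_mul' le_rfl hH)
        _ = (ENNReal.ofReal (Cχ ^ p) * ENNReal.ofReal ((z⁻¹) ^ p)
              * ENNReal.ofReal (A' ^ (p-1)))
            * ∫⁻ y : ℝ × ℝ, ENNReal.ofReal |D y| * ENNReal.ofReal (|Δ x y| ^ p) := by ring
    calc (∫⁻ x : ℝ × ℝ, ENNReal.ofReal
          (|χ z * ∫ y : ℝ × ℝ, b y * fderiv ℝ f (x + z • y) (unitVec i)| ^ p))
        ≤ ∫⁻ x : ℝ × ℝ,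
            (ENNReal.ofReal (Cχ ^ p) * ENNReal.ofReal ((z⁻¹) ^ p) * ENNReal.ofReal (A' ^ (p-1)))
              * ∫⁻ y : ℝ × ℝ, ENNReal.ofReal |D y| * ENNReal.ofReal (|Δ x y| ^ p) :=
          lintegral_mono hstep1
      _ = (ENNReal.ofReal (Cχ ^ p) * ENNReal.ofReal ((z⁻¹) ^ p) * ENNReal.ofReal (A' ^ (p-1)))
            * ∫⁻ x : ℝ × ℝ, ∫⁻ y : ℝ × ℝ,
                ENNReal.ofReal |D y| * ENNReal.ofReal (|Δ x y| ^ p) :=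
          lintegral_const_mul' _ _ (by
            exact ENNReal.mul_ne_top (ENNReal.mul_ne_top ENNReal.ofReal_ne_top
              ENNReal.ofReal_ne_top) ENNReal.ofReal_ne_top)
      _ = (ENNReal.ofReal (Cχ ^ p) * ENNReal.ofReal ((z⁻¹) ^ p) * ENNReal.ofReal (A' ^ (p-1)))
            * ∫⁻ y : ℝ × ℝ, ∫⁻ x : ℝ × ℝ,
                ENNReal.ofReal |D y| * ENNReal.ofReal (|Δ x y| ^ p) := by
          congr 1
          refine lintegral_lintegral_swap ?_
          apply Measurable.aemeasurable
          refine Measurable.mul (f := fun q : (ℝ × ℝ) × (ℝ × ℝ) => ENNReal.ofReal |D q.2|)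
            (g := fun q => ENNReal.ofReal (|Δ q.1 q.2| ^ p)) ?_ ?_
          · exact (ENNReal.measurable_ofReal.comp
              (hDc.abs.measurable.comp measurable_snd))
          · refine ENNReal.measurable_ofReal.comp ?_
            exact ((hΔcont.abs.rpow_const fun q => Or.inr hp0.le).measurable)
      _ = (ENNReal.ofReal (Cχ ^ p) * ENNReal.ofReal ((z⁻¹) ^ p) * ENNReal.ofReal (A' ^ (p-1)))
            * ∫⁻ y : ℝ × ℝ, ENNReal.ofReal |D y| * G (z * coordL i y) := by
          congr 1
          refine lintegral_congr fun y => ?_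
          rw [lintegral_const_mul' _ _ ENNReal.ofReal_ne_top]
          congr 1
          -- translation invariance in x
          have hdec : ∀ x : ℝ × ℝ, x + z • y
              = (x + z • projL i y) + (z * coordL i y) • unitVec i := by
            intro x
            calc x + z • y = x + z • (projL i y + coordL i y • unitVec i) := by
                  rw [← decomp]
              _ = (x + z • projL i y) + (z * coordL i y) • unitVec i := by
                  rw [smul_add, smul_smul, add_assoc]
          have hpt : ∀ x : ℝ × ℝ, ENNReal.ofReal (|Δ x y| ^ p)
              = ENNReal.ofReal (|f (x + z • projL i y)
                  - f ((x + z • projL i y) + (z * coordL i y) • unitVec i)| ^ p) := by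
            intro x
            simp only [hΔdef]
            rw [hdec x]
          have htr : ∫⁻ x : ℝ × ℝ, ENNReal.ofReal (|f (x + z • projL i y)
                - f ((x + z • projL i y) + (z * coordL i y) • unitVec i)| ^ p)
              = ∫⁻ u : ℝ × ℝ, ENNReal.ofReal
                  (|f u - f (u + (z * coordL i y) • unitVec i)| ^ p) :=
            lintegral_add_right_eq_self
              (fun u : ℝ × ℝ => ENNReal.ofReal
                (|f u - f (u + (z * coordL i y) • unitVec i)| ^ p)) (z • projL i y)
          rw [lintegral_congr hpt, htr]
          simp only [hGdef]
          refine lintegral_congr fun u => ?_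
          rw [abs_sub_comm]
      _ = K₁ * (ENNReal.ofReal ((z⁻¹) ^ p)
            * ∫⁻ y : ℝ × ℝ, ENNReal.ofReal |D y| * G (z * coordL i y)) := by
          rw [hK₁def]; ring
  -- main estimate
  have main : (∫⁻ z in Ioi (0 : ℝ), ∫⁻ x : ℝ × ℝ,
      ENNReal.ofReal (|χ z * ∫ y : ℝ × ℝ, b y * fderiv ℝ f (x + z • y) (unitVec i)| ^ p))
      ≤ ENNReal.ofReal (Cχ ^ p * A' ^ (p - 1) * B' + 1) * T := by
    calc (∫⁻ z in Ioi (0 : ℝ), ∫⁻ x : ℝ × ℝ,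
        ENNReal.ofReal (|χ z * ∫ y : ℝ × ℝ, b y * fderiv ℝ f (x + z • y) (unitVec i)| ^ p))
        ≤ ∫⁻ z in Ioi (0:ℝ), K₁ * (ENNReal.ofReal ((z⁻¹) ^ p)
            * ∫⁻ y : ℝ × ℝ, ENNReal.ofReal |D y| * G (z * coordL i y)) :=
          lintegral_mono_ae ((ae_restrict_iff' measurableSet_Ioi).2 (ae_of_all _ stepA))
      _ = K₁ * ∫⁻ z in Ioi (0:ℝ), ENNReal.ofReal ((z⁻¹) ^ p)
            * ∫⁻ y : ℝ × ℝ, ENNReal.ofReal |D y| * G (z * coordL i y) :=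
          lintegral_const_mul' _ _ hK₁ne
      _ = K₁ * ∫⁻ z in Ioi (0:ℝ), ∫⁻ y : ℝ × ℝ,
            ENNReal.ofReal |D y| * (ENNReal.ofReal ((z⁻¹) ^ p) * G (z * coordL i y)) := by
          congr 1
          refine lintegral_congr fun z => ?_
          rw [← lintegral_const_mul' (ENNReal.ofReal ((z⁻¹) ^ p)) _ ENNReal.ofReal_ne_top]
          refine lintegral_congr fun y => by ring
      _ = K₁ * ∫⁻ y : ℝ × ℝ, ∫⁻ z in Ioi (0:ℝ),
            ENNReal.ofReal |D y| * (ENNReal.ofReal ((z⁻¹) ^ p) * G (z * coordL i y)) := by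
          congr 1
          refine lintegral_lintegral_swap (Measurable.aemeasurable ?_)
          apply Measurable.mul
          · exact ENNReal.measurable_ofReal.comp (hDc.abs.measurable.comp measurable_snd)
          · apply Measurable.mul
            · exact ENNReal.measurable_ofReal.comp (measurable_fst.inv.pow_const p)
            · exact hGmeas.comp
                (measurable_fst.mul ((coordL i).continuous.measurable.comp measurable_snd))
      _ ≤ K₁ * ∫⁻ y : ℝ × ℝ, ENNReal.ofReal |D y|
            * (ENNReal.ofReal (|coordL i y| ^ (p-1)) * T) := by
          refine mul_le_mul' le_rfl (lintegral_mono fun y => ?_)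
          rw [lintegral_const_mul' _ _ ENNReal.ofReal_ne_top]
          exact mul_le_mul' le_rfl (scale_lemma hp G hGmeas hGeven hG0 (coordL i y))
      _ = K₁ * ((∫⁻ y : ℝ × ℝ, ENNReal.ofReal |D y|
            * ENNReal.ofReal (|coordL i y| ^ (p-1))) * T) := by
          congr 1
          rw [← lintegral_mul_const _ (show Measurable fun y : ℝ × ℝ =>
            ENNReal.ofReal |D y| * ENNReal.ofReal (|coordL i y| ^ (p-1)) from Measurable.mul
            hDc.abs.measurable.ennreal_ofReal hcabs.measurable.ennreal_ofReal)]
          refine lintegral_congr fun y => by ring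
      _ = K₁ * (ENNReal.ofReal B' * T) := by
          have : (∫⁻ y : ℝ × ℝ, ENNReal.ofReal |D y|
              * ENNReal.ofReal (|coordL i y| ^ (p-1))) = ENNReal.ofReal B' := by
            rw [hB'def, ofReal_integral_eq_lintegral_ofReal hB'int
              (ae_of_all _ fun y => by positivity)]
            refine lintegral_congr fun y => ?_
            rw [ENNReal.ofReal_mul (abs_nonneg _)]
          rw [this]
      _ ≤ ENNReal.ofReal (Cχ ^ p * A' ^ (p - 1) * B' + 1) * T := by
          rw [hK₁def, ← mul_assoc, ← ENNReal.ofReal_mul (by positivity),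
            ← ENNReal.ofReal_mul (by positivity)]
          exact mul_le_mul' (ENNReal.ofReal_le_ofReal (by linarith)) le_rfl
  constructor
  · rw [hT]
    exact main
  · refine le_trans main (mul_le_mul' le_rfl ?_)
    rw [← hT]
    calc (∫⁻ t in Ioi (0 : ℝ), ∫⁻ x : ℝ × ℝ,
          ENNReal.ofReal (|f (x + t • unitVec i) - f x| ^ p / t ^ p))
        ≤ ∑ j : Fin 2, ∫⁻ t in Ioi (0 : ℝ), ∫⁻ x : ℝ × ℝ,
            ENNReal.ofReal (|f (x + t • unitVec j) - f x| ^ p / t ^ p) :=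
          Finset.single_le_sum
            (f := fun j : Fin 2 => ∫⁻ t in Ioi (0:ℝ), ∫⁻ x : ℝ × ℝ,
              ENNReal.ofReal (|f (x + t • unitVec j) - f x| ^ p / t ^ p))
            (fun j _ => zero_le) (Finset.mem_univ i)
      _ ≤ (∫⁻ x : ℝ × ℝ, ENNReal.ofReal (|f x| ^ p)) +
            ∑ j : Fin 2, ∫⁻ t in Ioi (0 : ℝ), ∫⁻ x : ℝ × ℝ,
              ENNReal.ofReal (|f (x + t • unitVec j) - f x| ^ p / t ^ p) :=
          le_add_self
end

section
/- Let $0 < s < 1$, $1 < p < \infty$ with $sp = 1$, and let $f_1, f_2$ be functions on the reference triangle $T$ with $f_1 \in W^{s,p}(T)$, $f_2 \in W^{s,p}(T)$, and $\int_T |f_1(\mathbf{x}) - f_2(\mathbf{x})|^p \frac{d\mathbf{x}}{x_2} < \infty$. Then $\int_T \int_T \frac{|f_1(\mathbf{x}) - f_2(\mathbf{y})|^p}{|\mathbf{x}_r - \mathbf{y}|^{sp+2}}\,d\mathbf{y}\,d\mathbf{x} < \infty$, where $\mathbf{x}_r = (x_1, -x_2)$. Moreover the left side is bounded by a constant (depending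 on $s,p$) times $\|f_1\|_{W^{s,p}(T)}^p + \|f_2\|_{W^{s,p}(T)}^p + \int_T |f_1 - f_2|^p x_2^{-1}\,d\mathbf{x}$. -/
/-!
Split `|f₁ x - f₂ y| ≤ |f₁ x - f₂ x| + |f₂ x - f₂ y|` and use
`(a + b)^p ≤ 2^(p-1) (a^p + b^p)`. For `x, y` in the upper half-plane the reflected
distance dominates the ordinary one, `|x - y| ≤ |x_r - y|`, so the second term is bounded by
the Gagliardo seminorm of `f₂`. For the first term, the reflected kernel integrated over the
whole upper half-plane is at most `(π / α) x₂^(-α)` with `α = sp`: bound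
`(d² + c²)^(-(α+2)/2) ≤ c^(-α) (d² + c²)⁻¹`, integrate the Cauchy kernel in `y₁` to get
`π c^(-α-1)` with `c = x₂ + y₂`, then integrate in `y₂`.
For `sp = 1` this is exactly the weight `x₂⁻¹`.
-/

open MeasureTheory Set
open scoped ENNReal

/-- The `W^{s,p}(T)` norm to the `p`-th power (Gagliardo form). -/
noncomputable def gagNorm (p s : ℝ) (g : ℝ × ℝ → ℝ) : ℝ≥0∞ :=
  (∫⁻ x in refTri, ENNReal.ofReal (|g x| ^ p)) +
    ∫⁻ x in refTri, ∫⁻ y in refTri,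
      ENNReal.ofReal (|g x - g y| ^ p /
        (((x.1 - y.1) ^ 2 + (x.2 - y.2) ^ 2) ^ ((s * p + 2) / 2)))

/-- The mixed reflected double integral with kernel `|x_r - y|^{-(sp+2)}`,
where `x_r = (x₁, -x₂)`. -/
noncomputable def mixedInt (p s : ℝ) (f1 f2 : ℝ × ℝ → ℝ) : ℝ≥0∞ :=
  ∫⁻ x in refTri, ∫⁻ y in refTri,
    ENNReal.ofReal (|f1 x - f2 y| ^ p /
      (((x.1 - y.1) ^ 2 + (x.2 + y.2) ^ 2) ^ ((s * p + 2) / 2)))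

open Real

lemma abs_sub_rpow_le {p : ℝ} (hp : 1 ≤ p) (a b c : ℝ) :
    |a - c| ^ p ≤ 2 ^ (p - 1) * (|a - b| ^ p + |b - c| ^ p) := by
  have hmean := NNReal.rpow_add_le_mul_rpow_add_rpow ⟨|a - b|, abs_nonneg _⟩
    ⟨|b - c|, abs_nonneg _⟩ hp
  calc |a - c| ^ p ≤ (|a - b| + |b - c|) ^ p :=
        rpow_le_rpow (abs_nonneg _) (abs_sub_le a b c) (by linarith)
    _ ≤ 2 ^ (p - 1) * (|a - b| ^ p + |b - c| ^ p) := by exact_mod_cast hmean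

lemma rpow_inv_le_rpow_neg_mul_inv {α c : ℝ} (hα : 0 ≤ α) (hc : 0 < c) (d : ℝ) :
    ((d ^ 2 + c ^ 2) ^ ((α + 2) / 2))⁻¹ ≤ c ^ (-α) * (d ^ 2 + c ^ 2)⁻¹ := by
  have hX : 0 < d ^ 2 + c ^ 2 := by positivity
  have hcα : c ^ α ≤ (d ^ 2 + c ^ 2) ^ (α / 2) := by
    calc c ^ α = (c ^ 2) ^ (α / 2) := by
          rw [← rpow_natCast, ← rpow_mul hc.le]; congr 1; ring
      _ ≤ (d ^ 2 + c ^ 2) ^ (α / 2) := by gcongr; nlinarith [sq_nonneg d]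
  rw [rpow_neg hc.le, ← mul_inv, show (α + 2) / 2 = α / 2 + 1 by ring, rpow_add hX, rpow_one]
  gcongr

lemma lintegral_inv_sub_sq_add_sq {c : ℝ} (hc : 0 < c) (a : ℝ) :
    ∫⁻ t, ENNReal.ofReal (((a - t) ^ 2 + c ^ 2)⁻¹) = ENNReal.ofReal (π / c) := by
  have hshift : MeasurePreserving (fun t : ℝ => a - t) volume volume := by
    simp_rw [sub_eq_add_neg]
    exact (measurePreserving_add_left volume a).comp (Measure.measurePreserving_neg volume)
  rw [hshift.lintegral_comp
    (by fun_prop : Measurable fun u : ℝ => ENNReal.ofReal ((u ^ 2 + c ^ 2)⁻¹))]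
  have hscale : ∀ u : ℝ, (u ^ 2 + c ^ 2)⁻¹ = c⁻¹ ^ 2 * (1 + (c⁻¹ * u) ^ 2)⁻¹ := by
    intro u; field_simp; ring
  have hint : Integrable (fun u : ℝ => (u ^ 2 + c ^ 2)⁻¹) := by
    simp_rw [hscale]
    exact (integrable_inv_one_add_sq.comp_mul_left' (inv_ne_zero hc.ne')).const_mul _
  rw [← ofReal_integral_eq_lintegral_ofReal hint (.of_forall fun u => by positivity)]
  simp_rw [hscale]
  rw [integral_const_mul, Measure.integral_comp_inv_mul_left (fun x : ℝ => (1 + x ^ 2)⁻¹) c,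
    integral_univ_inv_one_add_sq, smul_eq_mul, abs_of_pos hc]
  congr 1
  field_simp

lemma lintegral_Ioi_add_rpow_neg {α b : ℝ} (hα : 0 < α) (hb : 0 < b) :
    ∫⁻ t in Ioi (0 : ℝ), ENNReal.ofReal ((b + t) ^ (-(α + 1))) =
      ENNReal.ofReal (b ^ (-α) / α) := by
  have hshift : (∫⁻ t in Ioi (0 : ℝ), ENNReal.ofReal ((b + t) ^ (-(α + 1))))
      = ∫⁻ u in Ioi b, ENNReal.ofReal (u ^ (-(α + 1))) := by
    have hpre : (fun t : ℝ => b + t) ⁻¹' Ioi b = Ioi 0 := by ext t; simp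
    rw [← hpre]
    exact (measurePreserving_add_left volume b).setLIntegral_comp_preimage_emb
      (MeasurableEquiv.addLeft b).measurableEmbedding
      (fun u => ENNReal.ofReal (u ^ (-(α + 1)))) _
  have hlt : -(α + 1) < -1 := by linarith
  rw [hshift, ← ofReal_integral_eq_lintegral_ofReal (integrableOn_Ioi_rpow_of_lt hlt hb)
    ((ae_restrict_iff' measurableSet_Ioi).2
      (.of_forall fun u hu => rpow_nonneg (hb.trans hu).le _)),
    integral_Ioi_rpow_of_lt hlt hb]
  congr 1
  rw [show -(α + 1) + 1 = -α by ring, neg_div_neg_eq]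

lemma lintegral_upperHalfPlane_reflected_kernel_le {α : ℝ} (hα : 0 < α) {x : ℝ × ℝ}
    (hx : 0 < x.2) :
    ∫⁻ y in univ ×ˢ Ioi (0 : ℝ),
      ENNReal.ofReal ((((x.1 - y.1) ^ 2 + (x.2 + y.2) ^ 2) ^ ((α + 2) / 2))⁻¹)
      ≤ ENNReal.ofReal (π / α * x.2 ^ (-α)) := by
  rw [Measure.volume_eq_prod, ← Measure.prod_restrict, Measure.restrict_univ,
    lintegral_prod_symm' _ (by fun_prop)]
  have hinner : ∀ y₂ ∈ Ioi (0 : ℝ), ∫⁻ y₁,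
      ENNReal.ofReal ((((x.1 - y₁) ^ 2 + (x.2 + y₂) ^ 2) ^ ((α + 2) / 2))⁻¹)
      ≤ ENNReal.ofReal π * ENNReal.ofReal ((x.2 + y₂) ^ (-(α + 1))) := by
    intro y₂ hy₂
    have hc : 0 < x.2 + y₂ := add_pos hx hy₂
    calc ∫⁻ y₁, ENNReal.ofReal ((((x.1 - y₁) ^ 2 + (x.2 + y₂) ^ 2) ^ ((α + 2) / 2))⁻¹)
        ≤ ∫⁻ y₁, ENNReal.ofReal ((x.2 + y₂) ^ (-α)) *
            ENNReal.ofReal (((x.1 - y₁) ^ 2 + (x.2 + y₂) ^ 2)⁻¹) := by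
          gcongr with y₁
          rw [← ENNReal.ofReal_mul (by positivity)]
          exact ENNReal.ofReal_le_ofReal (rpow_inv_le_rpow_neg_mul_inv hα.le hc _)
      _ = ENNReal.ofReal ((x.2 + y₂) ^ (-α)) * ENNReal.ofReal (π / (x.2 + y₂)) := by
          rw [lintegral_const_mul _ (by fun_prop), lintegral_inv_sub_sq_add_sq hc]
      _ = ENNReal.ofReal π * ENNReal.ofReal ((x.2 + y₂) ^ (-(α + 1))) := by
          rw [← ENNReal.ofReal_mul (by positivity), ← ENNReal.ofReal_mul pi_nonneg,
            neg_add, rpow_add hc, rpow_neg_one]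
          ring_nf
  calc ∫⁻ y₂ in Ioi (0 : ℝ), ∫⁻ y₁,
        ENNReal.ofReal ((((x.1 - y₁) ^ 2 + (x.2 + y₂) ^ 2) ^ ((α + 2) / 2))⁻¹)
      ≤ ∫⁻ y₂ in Ioi (0 : ℝ),
          ENNReal.ofReal π * ENNReal.ofReal ((x.2 + y₂) ^ (-(α + 1))) :=
        setLIntegral_mono' measurableSet_Ioi hinner
    _ = ENNReal.ofReal (π / α * x.2 ^ (-α)) := by
        rw [lintegral_const_mul _ (by fun_prop), lintegral_Ioi_add_rpow_neg hα hx,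
          ← ENNReal.ofReal_mul pi_nonneg]
        ring_nf

noncomputable def gagSeminorm (p s : ℝ) (g : ℝ × ℝ → ℝ) : ℝ≥0∞ :=
  ∫⁻ x in refTri, ∫⁻ y in refTri,
    ENNReal.ofReal (|g x - g y| ^ p /
      (((x.1 - y.1) ^ 2 + (x.2 - y.2) ^ 2) ^ ((s * p + 2) / 2)))

lemma gagSeminorm_le_gagNorm (p s : ℝ) (g : ℝ × ℝ → ℝ) :
    gagSeminorm p s g ≤ gagNorm p s g :=
  le_add_self

lemma measurableSet_refTri : MeasurableSet refTri :=
  (measurableSet_lt measurable_const measurable_fst).inter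
    ((measurableSet_lt measurable_const measurable_snd).inter
      (measurableSet_lt (measurable_fst.add measurable_snd) measurable_const))

lemma refTri_subset_upperHalfPlane : refTri ⊆ univ ×ˢ Ioi 0 :=
  fun _ hy => ⟨mem_univ _, hy.2.1⟩

lemma abs_sub_rpow_div_reflected_le {p β : ℝ} (hp : p ≠ 0) (hβ : 0 ≤ β)
    (g : ℝ × ℝ → ℝ) {x y : ℝ × ℝ} (hx : 0 < x.2) (hy : 0 < y.2) :
    |g x - g y| ^ p / ((x.1 - y.1) ^ 2 + (x.2 + y.2) ^ 2) ^ β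
      ≤ |g x - g y| ^ p / ((x.1 - y.1) ^ 2 + (x.2 - y.2) ^ 2) ^ β := by
  rcases eq_or_ne x y with rfl | hxy
  · -- on the diagonal the right side divides by zero, but the numerator vanishes
    simp [zero_rpow hp]
  have hK : 0 < (x.1 - y.1) ^ 2 + (x.2 - y.2) ^ 2 := by
    rcases ne_or_eq x.1 y.1 with h | h
    · have := sq_pos_of_ne_zero (sub_ne_zero.2 h); positivity
    · have := sq_pos_of_ne_zero (sub_ne_zero.2 fun h' => hxy (Prod.ext h h'))
      positivity
  exact div_le_div_of_nonneg_left (by positivity) (by positivity)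
    (rpow_le_rpow hK.le (by nlinarith) hβ)

lemma mixedInt_integrand_le {p β : ℝ} (hp : 1 ≤ p) (hβ : 0 ≤ β)
    (f1 f2 : ℝ × ℝ → ℝ) {x y : ℝ × ℝ} (hx : 0 < x.2) (hy : 0 < y.2) :
    ENNReal.ofReal (|f1 x - f2 y| ^ p / ((x.1 - y.1) ^ 2 + (x.2 + y.2) ^ 2) ^ β)
      ≤ ENNReal.ofReal (2 ^ (p - 1)) *
        (ENNReal.ofReal (|f1 x - f2 x| ^ p) *
            ENNReal.ofReal ((((x.1 - y.1) ^ 2 + (x.2 + y.2) ^ 2) ^ β)⁻¹) +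
          ENNReal.ofReal (|f2 x - f2 y| ^ p / ((x.1 - y.1) ^ 2 + (x.2 - y.2) ^ 2) ^ β)) := by
  set Kr := ((x.1 - y.1) ^ 2 + (x.2 + y.2) ^ 2) ^ β
  have hKr : 0 ≤ Kr := by positivity
  have hreal : |f1 x - f2 y| ^ p / Kr ≤ 2 ^ (p - 1) * (|f1 x - f2 x| ^ p * Kr⁻¹ +
      |f2 x - f2 y| ^ p / ((x.1 - y.1) ^ 2 + (x.2 - y.2) ^ 2) ^ β) :=
    calc |f1 x - f2 y| ^ p / Kr
        ≤ 2 ^ (p - 1) * (|f1 x - f2 x| ^ p + |f2 x - f2 y| ^ p) / Kr :=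
          div_le_div_of_nonneg_right (abs_sub_rpow_le hp _ _ _) hKr
      _ = 2 ^ (p - 1) * (|f1 x - f2 x| ^ p * Kr⁻¹ + |f2 x - f2 y| ^ p / Kr) := by ring
      _ ≤ _ := by
          gcongr 2 ^ (p - 1) * (_ + ?_)
          exact abs_sub_rpow_div_reflected_le (zero_lt_one.trans_le hp).ne' hβ f2 hx hy
  refine (ENNReal.ofReal_le_ofReal hreal).trans_eq ?_
  rw [ENNReal.ofReal_mul (by positivity), ENNReal.ofReal_add (by positivity) (by positivity),
    ENNReal.ofReal_mul (by positivity)]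

theorem mixedInt_le {p s : ℝ} (hp : 1 ≤ p) (hsp : 0 < s * p) {f1 f2 : ℝ × ℝ → ℝ}
    (hf1 : Measurable f1) (hf2 : Measurable f2) :
    mixedInt p s f1 f2 ≤ ENNReal.ofReal (2 ^ (p - 1)) *
      (ENNReal.ofReal (π / (s * p)) *
          (∫⁻ x in refTri, ENNReal.ofReal (|f1 x - f2 x| ^ p * x.2 ^ (-(s * p)))) +
        gagSeminorm p s f2) := by
  set β := (s * p + 2) / 2
  have hβ : 0 ≤ β := by positivity
  have hinner : ∀ x ∈ refTri, ∫⁻ y in refTri,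
      ENNReal.ofReal (|f1 x - f2 x| ^ p) *
        ENNReal.ofReal ((((x.1 - y.1) ^ 2 + (x.2 + y.2) ^ 2) ^ β)⁻¹)
      ≤ ENNReal.ofReal (π / (s * p)) *
        ENNReal.ofReal (|f1 x - f2 x| ^ p * x.2 ^ (-(s * p))) := by
    intro x hx
    rw [lintegral_const_mul _ (by fun_prop), ENNReal.ofReal_mul (by positivity), mul_left_comm,
      ← ENNReal.ofReal_mul (by positivity)]
    gcongr
    exact (lintegral_mono_set refTri_subset_upperHalfPlane).trans
      (lintegral_upperHalfPlane_reflected_kernel_le hsp hx.2.1)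
  calc mixedInt p s f1 f2
      ≤ ∫⁻ x in refTri, ∫⁻ y in refTri, ENNReal.ofReal (2 ^ (p - 1)) *
          (ENNReal.ofReal (|f1 x - f2 x| ^ p) *
              ENNReal.ofReal ((((x.1 - y.1) ^ 2 + (x.2 + y.2) ^ 2) ^ β)⁻¹) +
            ENNReal.ofReal (|f2 x - f2 y| ^ p / ((x.1 - y.1) ^ 2 + (x.2 - y.2) ^ 2) ^ β)) :=
        setLIntegral_mono' measurableSet_refTri fun x hx =>
          setLIntegral_mono' measurableSet_refTri fun y hy =>
            mixedInt_integrand_le hp hβ f1 f2 hx.2.1 hy.2.1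
    _ = ∫⁻ x in refTri, ENNReal.ofReal (2 ^ (p - 1)) *
          ((∫⁻ y in refTri, ENNReal.ofReal (|f1 x - f2 x| ^ p) *
              ENNReal.ofReal ((((x.1 - y.1) ^ 2 + (x.2 + y.2) ^ 2) ^ β)⁻¹)) +
            ∫⁻ y in refTri,
              ENNReal.ofReal (|f2 x - f2 y| ^ p / ((x.1 - y.1) ^ 2 + (x.2 - y.2) ^ 2) ^ β)) := by
        refine lintegral_congr fun x => ?_
        rw [lintegral_const_mul' _ _ ENNReal.ofReal_ne_top, lintegral_add_left (by fun_prop)]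
    _ ≤ ∫⁻ x in refTri, ENNReal.ofReal (2 ^ (p - 1)) *
          (ENNReal.ofReal (π / (s * p)) *
              ENNReal.ofReal (|f1 x - f2 x| ^ p * x.2 ^ (-(s * p))) +
            ∫⁻ y in refTri,
              ENNReal.ofReal (|f2 x - f2 y| ^ p / ((x.1 - y.1) ^ 2 + (x.2 - y.2) ^ 2) ^ β)) :=
        setLIntegral_mono' measurableSet_refTri fun x hx => by gcongr; exact hinner x hx
    _ = _ := by
        rw [lintegral_const_mul' _ _ ENNReal.ofReal_ne_top, lintegral_add_left (by fun_prop),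
          lintegral_const_mul _ (by fun_prop)]
        rfl

theorem stmt16_general (p s : ℝ) (hp : 1 < p) (hsp : s * p = 1) :
    ∃ C : ℝ, 0 < C ∧ ∀ f1 f2 : ℝ × ℝ → ℝ, Measurable f1 → Measurable f2 →
      gagNorm p s f1 < ⊤ → gagNorm p s f2 < ⊤ →
      (∫⁻ x in refTri, ENNReal.ofReal (|f1 x - f2 x| ^ p / x.2)) < ⊤ →
      (mixedInt p s f1 f2 < ⊤ ∧
        mixedInt p s f1 f2 ≤ ENNReal.ofReal C *
          (gagNorm p s f1 + gagNorm p s f2 +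
            ∫⁻ x in refTri, ENNReal.ofReal (|f1 x - f2 x| ^ p / x.2))) := by
  refine ⟨2 ^ (p - 1) * (π + 1), by positivity, fun f1 f2 hf1 hf2 hg1 hg2 hD => ?_⟩
  set D := ∫⁻ x in refTri, ENNReal.ofReal (|f1 x - f2 x| ^ p / x.2)
  set S := gagNorm p s f1 + gagNorm p s f2 + D
  have hweight :
      ∫⁻ x in refTri, ENNReal.ofReal (|f1 x - f2 x| ^ p * x.2 ^ (-(s * p))) = D := by
    simp_rw [hsp, rpow_neg_one, ← div_eq_mul_inv]
    rfl
  have hbound : mixedInt p s f1 f2 ≤ ENNReal.ofReal (2 ^ (p - 1) * (π + 1)) * S :=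
    calc mixedInt p s f1 f2
        ≤ ENNReal.ofReal (2 ^ (p - 1)) * (ENNReal.ofReal π * D + gagSeminorm p s f2) := by
          have := mixedInt_le hp.le (hsp ▸ one_pos) hf1 hf2
          rwa [hweight, hsp, div_one] at this
      _ ≤ ENNReal.ofReal (2 ^ (p - 1)) * (ENNReal.ofReal π * S + S) := by
          gcongr
          · exact le_add_self
          · exact (gagSeminorm_le_gagNorm p s f2).trans (le_add_self.trans le_self_add)
      _ = ENNReal.ofReal (2 ^ (p - 1) * (π + 1)) * S := by
          rw [ENNReal.ofReal_mul (by positivity), ENNReal.ofReal_add pi_nonneg zero_le_one,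
            ENNReal.ofReal_one, mul_assoc, add_one_mul]
  exact ⟨hbound.trans_lt (ENNReal.mul_lt_top ENNReal.ofReal_lt_top (by simp [S, *])), hbound⟩

/-- For `sp = 1`: if `f₁, f₂ ∈ W^{s,p}(T)` and `∫_T |f₁ - f₂|^p x₂⁻¹ < ∞`, then
the reflected mixed double integral is finite, and it is bounded by a constant
(depending only on `s, p`) times
`‖f₁‖_{W^{s,p}}^p + ‖f₂‖_{W^{s,p}}^p + ∫_T |f₁ - f₂|^p x₂⁻¹`. -/
theorem stmt16 (p s : ℝ) (hp : 1 < p) (hs0 : 0 < s) (hs1 : s < 1) (hsp : s * p = 1) :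
    ∃ C : ℝ, 0 < C ∧ ∀ f1 f2 : ℝ × ℝ → ℝ, Measurable f1 → Measurable f2 →
      gagNorm p s f1 < ⊤ → gagNorm p s f2 < ⊤ →
      (∫⁻ x in refTri, ENNReal.ofReal (|f1 x - f2 x| ^ p / x.2)) < ⊤ →
      (mixedInt p s f1 f2 < ⊤ ∧
        mixedInt p s f1 f2 ≤ ENNReal.ofReal C *
          (gagNorm p s f1 + gagNorm p s f2 +
            ∫⁻ x in refTri, ENNReal.ofReal (|f1 x - f2 x| ^ p / x.2))) :=
  stmt16_general p s hp hsp
end
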